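/- arXiv:2312.04039 — 4 statements merged into one kernel-verified Lean document; each statement's English description precedes it below -/
import Mathlib

section
/- Let V be a finite totally ordered set of even size with |V| ≥ 6, and let P be a pairing of V (so ∪P = V). Then the pairing P is irreducible if and only if the tournament Inv(underline(V), P) is indecomposable. -/
open Set

/-- The arc relation of the tournament `Inv(underline(V), P)` obtained from the
transitive tournament on a linearly ordered type by reversing the arcs `(x,y)`
with `{x,y} ∈ P`. -/
def InvArc {α : Type*} [LinearOrder α] (P : Set (Set α)) (x y : α) : Prop :=
  (x < y ∧ ({x, y} : Set α) ∉ P) ∨ (y < x ∧ ({x, y} : Set α) ∈ P)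

/-- `M` is a module of the subtournament of `Inv(·, P)` induced on the vertex set `W`. -/
def IsModuleOn {α : Type*} [LinearOrder α] (P : Set (Set α)) (W M : Set α) : Prop :=
  M ⊆ W ∧ ∀ v ∈ W, v ∉ M →
    (∀ x ∈ M, InvArc P v x) ∨ (∀ x ∈ M, InvArc P x v)

/-- A subset of the vertex set `W` is trivial if it is empty, a singleton, or all of `W`. -/
def IsTrivialSubset {α : Type*} (W M : Set α) : Prop :=
  M = ∅ ∨ (∃ a, M = {a}) ∨ M = W

/-- A nontrivial module of the tournament `Inv(·, P)` induced on `W`. -/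
def IsNontrivialModuleOn {α : Type*} [LinearOrder α] (P : Set (Set α)) (W M : Set α) : Prop :=
  IsModuleOn P W M ∧ ¬ IsTrivialSubset W M

/-- The tournament `Inv(·, P)` induced on `W` is indecomposable: all its modules are trivial. -/
def IndecomposableOn {α : Type*} [LinearOrder α] (P : Set (Set α)) (W : Set α) : Prop :=
  ∀ M : Set α, IsModuleOn P W M → IsTrivialSubset W M

/-- The tournament `Inv(·, P)` induced on `W` is decomposable: it has a nontrivial module. -/
def DecomposableOn {α : Type*} [LinearOrder α] (P : Set (Set α)) (W : Set α) : Prop :=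
  ∃ M : Set α, IsNontrivialModuleOn P W M

/-- A co-module of the tournament `Inv(·, P)` on `W`: a subset `M` of `W` such that
`M` or `W ∖ M` is a nontrivial module. -/
def IsCoModuleOn {α : Type*} [LinearOrder α] (P : Set (Set α)) (W M : Set α) : Prop :=
  M ⊆ W ∧ (IsNontrivialModuleOn P W M ∨ IsNontrivialModuleOn P W (W \ M))

/-- `mc(underline(W))`: the family of minimal co-modules of the transitive tournament on `W`
(a minimal co-module contains no other co-module). -/
def mcOn {α : Type*} [LinearOrder α] (W : Set α) : Set (Set α) :=
  {M | IsCoModuleOn (∅ : Set (Set α)) W M ∧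
    ∀ C : Set α, IsCoModuleOn (∅ : Set (Set α)) W C → C ⊆ M → C = M}

/-- `S` is a transversal of the family `F`: it meets every member of `F`. -/
def TransversalOf {α : Type*} (S : Set α) (F : Set (Set α)) : Prop :=
  ∀ C ∈ F, (S ∩ C).Nonempty

/-- A partial pairing of `V`: a set of pairwise disjoint 2-element subsets of `V`. -/
def IsPartialPairingOn {α : Type*} (V : Set α) (P : Set (Set α)) : Prop :=
  (∀ B ∈ P, B ⊆ V ∧ B.ncard = 2) ∧
  ∀ B ∈ P, ∀ C ∈ P, B ≠ C → Disjoint B C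

/-- `I` is an interval of the totally ordered set `X`: every element of `X ∖ I` is greater
than all elements of `I` or smaller than all of them. -/
def IsIntervalOf {α : Type*} [LinearOrder α] (X I : Set α) : Prop :=
  I ⊆ X ∧ ∀ v ∈ X \ I, (∀ i ∈ I, v < i) ∨ (∀ i ∈ I, i < v)

/-- A nontrivial interval of `X`. -/
def IsNontrivialIntervalOf {α : Type*} [LinearOrder α] (X I : Set α) : Prop :=
  IsIntervalOf X I ∧ ¬ IsTrivialSubset X I

/-- A family of blocks `P` on the totally ordered set `X` is irreducible if no nontrivial
interval of `X` is a union of blocks of `P`. -/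
def IrreducibleOn {α : Type*} [LinearOrder α] (X : Set α) (P : Set (Set α)) : Prop :=
  ∀ R ⊆ P, ¬ IsNontrivialIntervalOf X (⋃₀ R)

/-- A partial quasi-pairing of `V`: a set `Q` of `m+1` two-element subsets of `V` (`m ≥ 1`)
whose union has size `2m+1`. -/
def IsPartialQuasiPairingOn {α : Type*} (V : Set α) (Q : Set (Set α)) : Prop :=
  (∀ B ∈ Q, B ⊆ V ∧ B.ncard = 2) ∧
  ∃ m : ℕ, 1 ≤ m ∧ (⋃₀ Q).ncard = 2 * m + 1 ∧ Q.ncard = m + 1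

/-- The distinguished data of a quasi-pairing `Q`: `vh = v̂_Q` is the element lying in the two
blocks `{vh, vm}` and `{vh, vp}` of `Q`, with `vm = v_Q^- < v_Q^+ = vp`. -/
def QPData {α : Type*} [LinearOrder α] (Q : Set (Set α)) (vh vm vp : α) : Prop :=
  ({vh, vm} : Set α) ∈ Q ∧ ({vh, vp} : Set α) ∈ Q ∧ vm < vp

/-- `Q_part`: the partition of `⋃₀ Q` obtained from `Q` by merging its two intersecting
blocks into `B_Q = {v̂_Q, v_Q^-, v_Q^+}`. -/
def QPart {α : Type*} [LinearOrder α] (Q : Set (Set α)) (vh vm vp : α) : Set (Set α) :=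
  (Q \ {({vh, vm} : Set α), ({vh, vp} : Set α)}) ∪ {({vh, vm, vp} : Set α)}

section AuxStmt1

variable {α : Type*} [LinearOrder α] {V : Set α} {P : Set (Set α)} {p : α → α}

/-- `p` is a partner function for the pairing `P` of `V`. -/
def GoodPairing (V : Set α) (P : Set (Set α)) (p : α → α) : Prop :=
  ∀ x ∈ V, p x ∈ V ∧ p x ≠ x ∧ (∀ y : α, (({x, y} : Set α) ∈ P ↔ y = p x))

theorem GoodPairing.pp (hg : GoodPairing V P p) {x : α} (hx : x ∈ V) : p (p x) = x := by
  obtain ⟨hpV, hne, hiff⟩ := hg x hx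
  obtain ⟨_, _, hiff2⟩ := hg (p x) hpV
  exact ((hiff2 x).mp (by rw [Set.pair_comm]; exact (hiff (p x)).mpr rfl)).symm

theorem GoodPairing.pinj (hg : GoodPairing V P p) {x y : α} (hx : x ∈ V) (hy : y ∈ V)
    (h : p x = p y) : x = y := by
  rw [← hg.pp hx, h, hg.pp hy]

theorem arc_iff (hg : GoodPairing V P p) {x : α} (hx : x ∈ V) (y : α) :
    InvArc P x y ↔ (x < y ∧ y ≠ p x) ∨ (y < x ∧ y = p x) := by
  have h := (hg x hx).2.2 y
  simp only [InvArc, h]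

theorem cross (hg : GoodPairing V P p) {M : Set α} (hMod : IsModuleOn P V M)
    {x : α} (hx : x ∈ M) (hpx : p x ∉ M) :
    (x < p x ∧ ∀ z ∈ M, z ≠ x → p x < z) ∨ (p x < x ∧ ∀ z ∈ M, z ≠ x → z < p x) := by
  have hxV : x ∈ V := hMod.1 hx
  have hpV : p x ∈ V := (hg x hxV).1
  have hpp := hg.pp hxV
  rcases hMod.2 (p x) hpV hpx with h | h
  · left
    have hx0 : x < p x := by
      rcases (arc_iff hg hpV x).mp (h x hx) with ⟨h1, h2⟩ | ⟨h1, h2⟩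
      · exact absurd hpp.symm h2
      · exact h1
    refine ⟨hx0, fun z hz hzx => ?_⟩
    rcases (arc_iff hg hpV z).mp (h z hz) with ⟨h1, h2⟩ | ⟨h1, h2⟩
    · exact h1
    · exact absurd (h2.trans hpp) hzx
  · right
    have hx0 : p x < x := by
      rcases (arc_iff hg hxV (p x)).mp (h x hx) with ⟨h1, h2⟩ | ⟨h1, h2⟩
      · exact absurd rfl h2
      · exact h1
    refine ⟨hx0, fun z hz hzx => ?_⟩
    have hzV : z ∈ V := hMod.1 hz
    rcases (arc_iff hg hzV (p x)).mp (h z hz) with ⟨h1, h2⟩ | ⟨h1, h2⟩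
    · exact h1
    · exact absurd (hg.pinj hxV hzV h2).symm hzx

theorem closed_interval (hg : GoodPairing V P p) {M : Set α} (hMod : IsModuleOn P V M)
    (hcl : ∀ x ∈ M, p x ∈ M) : IsIntervalOf V M := by
  refine ⟨hMod.1, fun v hv => ?_⟩
  have hvV : v ∈ V := hv.1
  have hvM : v ∉ M := hv.2
  rcases hMod.2 v hvV hvM with h | h
  · left
    intro i hi
    rcases (arc_iff hg hvV i).mp (h i hi) with ⟨h1, _⟩ | ⟨h1, h2⟩
    · exact h1
    · exact absurd (by rw [show v = p i by rw [h2, hg.pp hvV]]; exact hcl i hi) hvM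
  · right
    intro i hi
    rcases (arc_iff hg (hMod.1 hi) v).mp (h i hi) with ⟨h1, _⟩ | ⟨h1, h2⟩
    · exact h1
    · exact absurd (by rw [h2]; exact hcl i hi) hvM

theorem ext_min (hg : GoodPairing V P p) {M : Set α} (hMod : IsModuleOn P V M)
    {m0 : α} (hm0 : m0 ∈ M) (hmin : ∀ x ∈ M, m0 ≤ x)
    {c d : α} (hc : c ∈ M) (hd : d ∈ M) (hcm : c ≠ m0) (hdm : d ≠ m0) (hcd : c ≠ d)
    (ha : p m0 ∉ M) :
    (m0 < p m0 ∧ ∀ x ∈ M, x ≠ m0 → p m0 < x) ∧ IsModuleOn P V (insert (p m0) M) := by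
  have hm0V : m0 ∈ V := hMod.1 hm0
  have haV : p m0 ∈ V := (hg m0 hm0V).1
  have hmain : m0 < p m0 ∧ ∀ x ∈ M, x ≠ m0 → p m0 < x := by
    rcases cross hg hMod hm0 ha with h | ⟨h1, h2⟩
    · exact h
    · exact absurd (hmin c hc) (not_le.mpr ((h2 c hc hcm).trans h1))
  refine ⟨hmain, ?_, ?_⟩
  · intro z hz
    rcases Set.mem_insert_iff.mp hz with rfl | hz
    · exact haV
    · exact hMod.1 hz
  · intro w hwV hwN
    have hwa : w ≠ p m0 := fun h => hwN (h ▸ Set.mem_insert _ _)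
    have hwM : w ∉ M := fun h => hwN (Set.mem_insert_of_mem _ h)
    rcases hMod.2 w hwV hwM with h | h
    · left
      have hwm0 : w < m0 := by
        rcases (arc_iff hg hwV m0).mp (h m0 hm0) with ⟨h1, _⟩ | ⟨h1, h2⟩
        · exact h1
        · exact absurd (show p m0 = w by rw [h2, hg.pp hwV]).symm hwa
      intro x hx
      rcases Set.mem_insert_iff.mp hx with rfl | hx
      · refine (arc_iff hg hwV (p m0)).mpr (Or.inl ⟨hwm0.trans hmain.1, ?_⟩)
        intro he
        exact hwM ((hg.pinj hm0V hwV he) ▸ hm0)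
      · exact h x hx
    · right
      have haw : p m0 < w := by
        rcases lt_trichotomy w (p m0) with hlt | heq | hgt
        · exfalso
          have key : ∀ z ∈ M, z ≠ m0 → z = p w := by
            intro z hz hzm
            rcases (arc_iff hg (hMod.1 hz) w).mp (h z hz) with ⟨h1, _⟩ | ⟨h1, h2⟩
            · exact absurd h1 (not_lt.mpr (le_of_lt (hlt.trans (hmain.2 z hz hzm))))
            · rw [h2, hg.pp (hMod.1 hz)]
          exact hcd ((key c hc hcm).trans (key d hd hdm).symm)
        · exact absurd heq hwa
        · exact hgt
      intro x hx
      rcases Set.mem_insert_iff.mp hx with rfl | hx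
      · refine (arc_iff hg haV w).mpr (Or.inl ⟨haw, ?_⟩)
        intro he
        exact hwM (by rw [he, hg.pp hm0V]; exact hm0)
      · exact h x hx

theorem ext_max (hg : GoodPairing V P p) {M : Set α} (hMod : IsModuleOn P V M)
    {m1 : α} (hm1 : m1 ∈ M) (hmax : ∀ x ∈ M, x ≤ m1)
    {c d : α} (hc : c ∈ M) (hd : d ∈ M) (hcm : c ≠ m1) (hdm : d ≠ m1) (hcd : c ≠ d)
    (hb : p m1 ∉ M) :
    (p m1 < m1 ∧ ∀ x ∈ M, x ≠ m1 → x < p m1) ∧ IsModuleOn P V (insert (p m1) M) := by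
  have hm1V : m1 ∈ V := hMod.1 hm1
  have hbV : p m1 ∈ V := (hg m1 hm1V).1
  have hmain : p m1 < m1 ∧ ∀ x ∈ M, x ≠ m1 → x < p m1 := by
    rcases cross hg hMod hm1 hb with ⟨h1, h2⟩ | h
    · exact absurd (hmax c hc) (not_le.mpr (h1.trans (h2 c hc hcm)))
    · exact h
  refine ⟨hmain, ?_, ?_⟩
  · intro z hz
    rcases Set.mem_insert_iff.mp hz with rfl | hz
    · exact hbV
    · exact hMod.1 hz
  · intro w hwV hwN
    have hwb : w ≠ p m1 := fun h => hwN (h ▸ Set.mem_insert _ _)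
    have hwM : w ∉ M := fun h => hwN (Set.mem_insert_of_mem _ h)
    rcases hMod.2 w hwV hwM with h | h
    · left
      have hwb' : w < p m1 := by
        rcases lt_trichotomy w (p m1) with hlt | heq | hgt
        · exact hlt
        · exact absurd heq hwb
        · exfalso
          have key : ∀ z ∈ M, z ≠ m1 → z = p w := by
            intro z hz hzm
            rcases (arc_iff hg hwV z).mp (h z hz) with ⟨h1, _⟩ | ⟨h1, h2⟩
            · exact absurd h1 (not_lt.mpr (le_of_lt ((hmain.2 z hz hzm).trans hgt)))
            · exact h2
          exact hcd ((key c hc hcm).trans (key d hd hdm).symm)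
      intro x hx
      rcases Set.mem_insert_iff.mp hx with rfl | hx
      · refine (arc_iff hg hwV (p m1)).mpr (Or.inl ⟨hwb', ?_⟩)
        intro he
        exact hwM ((hg.pinj hm1V hwV he) ▸ hm1)
      · exact h x hx
    · right
      have hm1w : m1 < w := by
        rcases (arc_iff hg hm1V w).mp (h m1 hm1) with ⟨h1, _⟩ | ⟨h1, h2⟩
        · exact h1
        · exact absurd h2 hwb
      intro x hx
      rcases Set.mem_insert_iff.mp hx with rfl | hx
      · refine (arc_iff hg hbV w).mpr (Or.inl ⟨hmain.1.trans hm1w, ?_⟩)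
        intro he
        exact hwM (by rw [he, hg.pp hm1V]; exact hm1)
      · exact h x hx

theorem closed_of_ends (hg : GoodPairing V P p) {M : Set α} (hMod : IsModuleOn P V M)
    {m0 m1 : α} (hm0 : m0 ∈ M) (hmin : ∀ x ∈ M, m0 ≤ x) (hm1 : m1 ∈ M)
    (hmax : ∀ x ∈ M, x ≤ m1) (h0 : p m0 ∈ M) (h1 : p m1 ∈ M) : ∀ x ∈ M, p x ∈ M := by
  intro x hx
  by_contra hpx
  rcases cross hg hMod hx hpx with ⟨h, hall⟩ | ⟨h, hall⟩
  · have hxm : x = m0 := by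
      by_contra hne
      exact absurd (hmin x hx) (not_le.mpr (h.trans (hall m0 hm0 (fun he => hne he.symm))))
    exact hpx (by rw [hxm]; exact h0)
  · have hxm : x = m1 := by
      by_contra hne
      exact absurd (hmax x hx) (not_le.mpr ((hall m1 hm1 (fun he => hne he.symm)).trans h))
    exact hpx (by rw [hxm]; exact h1)

theorem union_blocks (hg : GoodPairing V P p) {S : Set α} (hSV : S ⊆ V)
    (hcl : ∀ x ∈ S, p x ∈ S) :
    ∃ R ⊆ P, ⋃₀ R = S := by
  refine ⟨(fun x => ({x, p x} : Set α)) '' S, ?_, ?_⟩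
  · rintro B ⟨x, hx, rfl⟩
    exact ((hg x (hSV hx)).2.2 (p x)).mpr rfl
  · ext z
    constructor
    · rintro ⟨B, ⟨x, hx, rfl⟩, hz⟩
      simp only [Set.mem_insert_iff, Set.mem_singleton_iff] at hz
      rcases hz with rfl | rfl
      · exact hx
      · exact hcl x hx
    · intro hz
      exact ⟨{z, p z}, ⟨z, hz, rfl⟩, Set.mem_insert _ _⟩

theorem nontrivial_of {W I : Set α} {x y : α} (hx : x ∈ I) (hy : y ∈ I) (hxy : x ≠ y)
    (hIW : I ≠ W) : ¬ IsTrivialSubset W I := by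
  rintro (h | ⟨a, ha⟩ | h)
  · rw [h] at hx; exact hx
  · rw [ha, Set.mem_singleton_iff] at hx hy
    exact hxy (hx.trans hy.symm)
  · exact hIW h

theorem finish_closed (hg : GoodPairing V P p) {S : Set α} (hMod : IsModuleOn P V S)
    {m0 m1 x y : α}
    (hm0 : m0 ∈ S) (hmin : ∀ z ∈ S, m0 ≤ z) (hm1 : m1 ∈ S) (hmax : ∀ z ∈ S, z ≤ m1)
    (h0 : p m0 ∈ S) (h1 : p m1 ∈ S)
    (hx : x ∈ S) (hy : y ∈ S) (hxy : x ≠ y) (hSV : S ≠ V) :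
    ∃ R ⊆ P, IsNontrivialIntervalOf V (⋃₀ R) := by
  have hcl := closed_of_ends hg hMod hm0 hmin hm1 hmax h0 h1
  obtain ⟨R, hRP, hR⟩ := union_blocks hg hMod.1 hcl
  exact ⟨R, hRP, by rw [hR]; exact ⟨closed_interval hg hMod hcl, nontrivial_of hx hy hxy hSV⟩⟩

theorem finish_one_block (hg : GoodPairing V P p) (hVcard : 6 ≤ V.ncard) {u : α} (huV : u ∈ V)
    (h : ∀ v ∈ V, v ≠ u → v ≠ p u → (v < u ∧ v < p u) ∨ (u < v ∧ p u < v)) :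
    ∃ R ⊆ P, IsNontrivialIntervalOf V (⋃₀ R) := by
  have hpu : ({u, p u} : Set α) ∈ P := ((hg u huV).2.2 (p u)).mpr rfl
  refine ⟨{({u, p u} : Set α)}, by simpa using hpu, ?_⟩
  rw [Set.sUnion_singleton]
  have hsub : ({u, p u} : Set α) ⊆ V := by
    intro z hz
    simp only [Set.mem_insert_iff, Set.mem_singleton_iff] at hz
    rcases hz with rfl | rfl
    · exact huV
    · exact (hg u huV).1
  refine ⟨⟨hsub, ?_⟩, ?_⟩
  · intro v hv
    have hvu : v ≠ u := fun he => hv.2 (he ▸ Set.mem_insert _ _)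
    have hvpu : v ≠ p u := fun he => hv.2 (by rw [he]; exact Set.mem_insert_of_mem _ rfl)
    rcases h v hv.1 hvu hvpu with ⟨h1, h2⟩ | ⟨h1, h2⟩
    · left
      intro i hi
      simp only [Set.mem_insert_iff, Set.mem_singleton_iff] at hi
      rcases hi with rfl | rfl
      · exact h1
      · exact h2
    · right
      intro i hi
      simp only [Set.mem_insert_iff, Set.mem_singleton_iff] at hi
      rcases hi with rfl | rfl
      · exact h1
      · exact h2
  · refine nontrivial_of (Set.mem_insert _ _)
      (Set.mem_insert_of_mem _ rfl) (Ne.symm (hg u huV).2.1) ?_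
    intro hEq
    have h2 : ({u, p u} : Set α).ncard ≤ 2 := le_trans (Set.ncard_insert_le _ _) (by simp)
    rw [hEq] at h2
    omega


theorem ncard_four_le (a b c d : α) : ({a, b, c, d} : Set α).ncard ≤ 4 := by
  have h1 : ({d} : Set α).ncard = 1 := Set.ncard_singleton d
  have h2 : ({c, d} : Set α).ncard ≤ 2 := le_trans (Set.ncard_insert_le _ _) (by omega)
  have h3 : ({b, c, d} : Set α).ncard ≤ 3 := le_trans (Set.ncard_insert_le _ _) (by omega)
  exact le_trans (Set.ncard_insert_le _ _) (by omega)

theorem hard_direction (hg : GoodPairing V P p) (hVcard : 6 ≤ V.ncard) (hVfin : V.Finite)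
    {M : Set α} (hM : IsNontrivialModuleOn P V M) :
    ∃ R ⊆ P, IsNontrivialIntervalOf V (⋃₀ R) := by
  obtain ⟨hMod, hnt⟩ := hM
  have hMV : M ⊆ V := hMod.1
  have hMfin : M.Finite := hVfin.subset hMV
  have hMne : M.Nonempty := by
    rcases Set.eq_empty_or_nonempty M with h | h
    · exact absurd (Or.inl h) hnt
    · exact h
  have hMneV : M ≠ V := fun h => hnt (Or.inr (Or.inr h))
  obtain ⟨m0, hm0, hmin⟩ := Set.exists_min_image M id hMfin hMne
  obtain ⟨m1, hm1, hmax⟩ := Set.exists_max_image M id hMfin hMne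
  simp only [id] at hmin hmax
  have hm01 : m0 ≠ m1 := by
    intro h
    apply hnt
    exact Or.inr (Or.inl ⟨m0, Set.eq_singleton_iff_unique_mem.mpr ⟨hm0, fun z hz =>
      le_antisymm (h ▸ hmax z hz) (hmin z hz)⟩⟩)
  have hm0V := hMV hm0
  have hm1V := hMV hm1
  have hm01' : m0 < m1 := lt_of_le_of_ne (hmin m1 hm1) hm01
  by_cases hc0 : p m0 ∈ M <;> by_cases hc1 : p m1 ∈ M
  · -- both partners inside
    exact finish_closed hg hMod hm0 hmin hm1 hmax hc0 hc1 hm0 hm1 hm01 hMneV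
  · -- p m0 ∈ M, p m1 ∉ M : extend at the top
    have hthird : ∃ c ∈ M, c ≠ m0 ∧ c ≠ m1 := by
      by_contra hco
      push_neg at hco
      have hpm0 : p m0 = m1 := hco _ hc0 (hg m0 hm0V).2.1
      exact hc1 (by rw [← hpm0, hg.pp hm0V]; exact hm0)
    obtain ⟨c, hcM, hcm0, hcm1⟩ := hthird
    obtain ⟨⟨hb1, hb2⟩, hModN⟩ :=
      ext_max hg hMod hm1 hmax hm0 hcM hm01 hcm1 (Ne.symm hcm0) hc1
    have hbV : p m1 ∈ V := (hg m1 hm1V).1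
    have hminN : ∀ z ∈ insert (p m1) M, m0 ≤ z := by
      intro z hz
      rcases Set.mem_insert_iff.mp hz with rfl | hz
      · exact le_of_lt (hb2 m0 hm0 hm01)
      · exact hmin z hz
    have hmaxN : ∀ z ∈ insert (p m1) M, z ≤ m1 := by
      intro z hz
      rcases Set.mem_insert_iff.mp hz with rfl | hz
      · exact le_of_lt hb1
      · exact hmax z hz
    by_cases hNV : insert (p m1) M = V
    · apply finish_one_block hg hVcard hm1V
      intro v hvV hvm1 hvb
      left
      rw [← hNV] at hvV
      rcases Set.mem_insert_iff.mp hvV with rfl | hv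
      · exact absurd rfl hvb
      · exact ⟨lt_of_le_of_ne (hmax v hv) hvm1, hb2 v hv hvm1⟩
    · exact finish_closed hg hModN (Set.mem_insert_of_mem _ hm0) hminN
        (Set.mem_insert_of_mem _ hm1) hmaxN (Set.mem_insert_of_mem _ hc0)
        (Set.mem_insert _ _) (Set.mem_insert_of_mem _ hm0) (Set.mem_insert_of_mem _ hm1)
        hm01 hNV
  · -- p m0 ∉ M, p m1 ∈ M : extend at the bottom
    have hthird : ∃ c ∈ M, c ≠ m0 ∧ c ≠ m1 := by
      by_contra hco
      push_neg at hco
      have hpm1 : p m1 = m0 := by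
        by_contra hne
        exact (hg m1 hm1V).2.1 (hco _ hc1 hne)
      exact hc0 (by rw [← hpm1, hg.pp hm1V]; exact hm1)
    obtain ⟨c, hcM, hcm0, hcm1⟩ := hthird
    obtain ⟨⟨ha1, ha2⟩, hModN⟩ :=
      ext_min hg hMod hm0 hmin hm1 hcM (Ne.symm hm01) hcm0 (Ne.symm hcm1) hc0
    have haV : p m0 ∈ V := (hg m0 hm0V).1
    have hminN : ∀ z ∈ insert (p m0) M, m0 ≤ z := by
      intro z hz
      rcases Set.mem_insert_iff.mp hz with rfl | hz
      · exact le_of_lt ha1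
      · exact hmin z hz
    have hmaxN : ∀ z ∈ insert (p m0) M, z ≤ m1 := by
      intro z hz
      rcases Set.mem_insert_iff.mp hz with rfl | hz
      · exact le_of_lt (ha2 m1 hm1 (Ne.symm hm01))
      · exact hmax z hz
    by_cases hNV : insert (p m0) M = V
    · apply finish_one_block hg hVcard hm0V
      intro v hvV hvm0 hva
      right
      rw [← hNV] at hvV
      rcases Set.mem_insert_iff.mp hvV with rfl | hv
      · exact absurd rfl hva
      · exact ⟨lt_of_le_of_ne (hmin v hv) (Ne.symm hvm0), ha2 v hv hvm0⟩
    · exact finish_closed hg hModN (Set.mem_insert_of_mem _ hm0) hminN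
        (Set.mem_insert_of_mem _ hm1) hmaxN (Set.mem_insert _ _)
        (Set.mem_insert_of_mem _ hc1) (Set.mem_insert_of_mem _ hm0)
        (Set.mem_insert_of_mem _ hm1) hm01 hNV
  · -- both partners outside
    by_cases h2 : ∀ z ∈ M, z = m0 ∨ z = m1
    · -- M = {m0, m1}
      have haV : p m0 ∈ V := (hg m0 hm0V).1
      have hbV : p m1 ∈ V := (hg m1 hm1V).1
      have hab : p m0 ≠ p m1 := fun h => hm01 (hg.pinj hm0V hm1V h)
      have hpos0 : m0 < p m0 ∧ p m0 < m1 := by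
        rcases cross hg hMod hm0 hc0 with ⟨h1, hall⟩ | ⟨h1, hall⟩
        · exact ⟨h1, hall m1 hm1 (Ne.symm hm01)⟩
        · exact absurd (hall m1 hm1 (Ne.symm hm01)) (not_lt.mpr (le_of_lt (h1.trans hm01')))
      have hpos1 : m0 < p m1 ∧ p m1 < m1 := by
        rcases cross hg hMod hm1 hc1 with ⟨h1, hall⟩ | ⟨h1, hall⟩
        · exact absurd (hall m0 hm0 hm01) (not_lt.mpr (le_of_lt (hm01'.trans h1)))
        · exact ⟨hall m0 hm0 hm01, h1⟩
      have houts : ∀ v ∈ V, v ≠ m0 → v ≠ m1 → v ≠ p m0 → v ≠ p m1 → v < m0 ∨ m1 < v := by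
        intro v hvV hv0 hv1 hva hvb
        have hvM : v ∉ M := fun h => by
          rcases h2 v h with rfl | rfl
          · exact hv0 rfl
          · exact hv1 rfl
        rcases hMod.2 v hvV hvM with h | h
        · left
          rcases (arc_iff hg hvV m0).mp (h m0 hm0) with ⟨h1, _⟩ | ⟨h1, hh⟩
          · exact h1
          · exact absurd (show p m0 = v by rw [hh, hg.pp hvV]).symm hva
        · right
          rcases (arc_iff hg hm1V v).mp (h m1 hm1) with ⟨h1, _⟩ | ⟨h1, hh⟩
          · exact h1
          · exact absurd hh hvb
      refine ⟨{({m0, p m0} : Set α), ({m1, p m1} : Set α)}, ?_, ?_⟩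
      · intro B hB
        simp only [Set.mem_insert_iff, Set.mem_singleton_iff] at hB
        rcases hB with rfl | rfl
        · exact ((hg m0 hm0V).2.2 (p m0)).mpr rfl
        · exact ((hg m1 hm1V).2.2 (p m1)).mpr rfl
      · rw [Set.sUnion_insert, Set.sUnion_singleton]
        have hmem : ∀ z : α, z ∈ ({m0, p m0} : Set α) ∪ ({m1, p m1} : Set α) ↔
            z = m0 ∨ z = p m0 ∨ z = m1 ∨ z = p m1 := by
          intro z
          simp only [Set.mem_union, Set.mem_insert_iff, Set.mem_singleton_iff]
          tauto
        constructor
        · constructor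
          · intro z hz
            rcases (hmem z).mp hz with rfl | rfl | rfl | rfl
            · exact hm0V
            · exact haV
            · exact hm1V
            · exact hbV
          · intro v hv
            have hvne : v ≠ m0 ∧ v ≠ p m0 ∧ v ≠ m1 ∧ v ≠ p m1 := by
              refine ⟨?_, ?_, ?_, ?_⟩ <;> intro he <;> exact hv.2 ((hmem v).mpr (by tauto))
            obtain ⟨hv0, hva, hv1, hvb⟩ := hvne
            rcases houts v hv.1 hv0 hv1 hva hvb with hlt | hgt
            · left
              intro i hi
              rcases (hmem i).mp hi with rfl | rfl | rfl | rfl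
              · exact hlt
              · exact hlt.trans hpos0.1
              · exact hlt.trans hm01'
              · exact hlt.trans hpos1.1
            · right
              intro i hi
              rcases (hmem i).mp hi with rfl | rfl | rfl | rfl
              · exact hm01'.trans hgt
              · exact hpos0.2.trans hgt
              · exact hgt
              · exact hpos1.2.trans hgt
        · refine nontrivial_of (x := m0) (y := p m0) ((hmem m0).mpr (by tauto))
            ((hmem (p m0)).mpr (by tauto)) (Ne.symm (hg m0 hm0V).2.1) ?_
          intro hEq
          have h4 : (({m0, p m0} : Set α) ∪ ({m1, p m1} : Set α)).ncard ≤ 4 := by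
            have heq : ({m0, p m0} : Set α) ∪ ({m1, p m1} : Set α) =
                ({m0, p m0, m1, p m1} : Set α) := by
              ext z
              simp only [Set.mem_union, Set.mem_insert_iff, Set.mem_singleton_iff]
              tauto
            rw [heq]
            exact ncard_four_le _ _ _ _
          rw [hEq] at h4
          omega
    · -- there is a third element: extend at both ends
      push_neg at h2
      obtain ⟨c, hcM, hcm0, hcm1⟩ := h2
      obtain ⟨⟨ha1, ha2⟩, hModN1⟩ :=
        ext_min hg hMod hm0 hmin hm1 hcM (Ne.symm hm01) hcm0 (Ne.symm hcm1) hc0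
      have haV : p m0 ∈ V := (hg m0 hm0V).1
      have ham1 : p m0 < m1 := ha2 m1 hm1 (Ne.symm hm01)
      have hm1N1 : m1 ∈ insert (p m0) M := Set.mem_insert_of_mem _ hm1
      have hmaxN1 : ∀ z ∈ insert (p m0) M, z ≤ m1 := by
        intro z hz
        rcases Set.mem_insert_iff.mp hz with rfl | hz
        · exact le_of_lt ham1
        · exact hmax z hz
      have hbN1 : p m1 ∉ insert (p m0) M := by
        intro h
        rcases Set.mem_insert_iff.mp h with he | hMm
        · exact hm01 (hg.pinj hm1V hm0V he).symm
        · exact hc1 hMm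
      obtain ⟨⟨hbb1, hbb2⟩, hModN2⟩ :=
        ext_max hg hModN1 hm1N1 hmaxN1 (Set.mem_insert_of_mem _ hm0)
          (Set.mem_insert _ _) hm01 (ne_of_lt ham1) (ne_of_lt ha1) hbN1
      have hab' : p m0 < p m1 := hbb2 (p m0) (Set.mem_insert _ _) (ne_of_lt ham1)
      have hbV : p m1 ∈ V := (hg m1 hm1V).1
      have hminN2 : ∀ z ∈ insert (p m1) (insert (p m0) M), m0 ≤ z := by
        intro z hz
        rcases Set.mem_insert_iff.mp hz with rfl | hz
        · exact le_of_lt (lt_of_lt_of_le ha1 (le_of_lt (hbb2 (p m0) (Set.mem_insert _ _) (ne_of_lt ham1))))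
        · rcases Set.mem_insert_iff.mp hz with rfl | hz
          · exact le_of_lt ha1
          · exact hmin z hz
      have hmaxN2 : ∀ z ∈ insert (p m1) (insert (p m0) M), z ≤ m1 := by
        intro z hz
        rcases Set.mem_insert_iff.mp hz with rfl | hz
        · exact le_of_lt hbb1
        · exact hmaxN1 z hz
      by_cases hNV : insert (p m1) (insert (p m0) M) = V
      · apply finish_one_block hg hVcard hm0V
        intro v hvV hvm0 hva
        right
        rw [← hNV] at hvV
        rcases Set.mem_insert_iff.mp hvV with rfl | hv
        · exact ⟨ha1.trans hab', hab'⟩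
        · rcases Set.mem_insert_iff.mp hv with rfl | hv
          · exact absurd rfl hva
          · exact ⟨lt_of_le_of_ne (hmin v hv) (Ne.symm hvm0), ha2 v hv hvm0⟩
      · exact finish_closed hg hModN2
          (Set.mem_insert_of_mem _ (Set.mem_insert_of_mem _ hm0)) hminN2
          (Set.mem_insert_of_mem _ hm1N1) hmaxN2
          (Set.mem_insert_of_mem _ (Set.mem_insert _ _)) (Set.mem_insert _ _)
          (Set.mem_insert_of_mem _ (Set.mem_insert_of_mem _ hm0))
          (Set.mem_insert_of_mem _ hm1N1) hm01 hNV

theorem easy_direction (hP : IsPartialPairingOn V P) (hInd : IndecomposableOn P V) :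
    IrreducibleOn V P := by
  intro R hRP hI
  apply hI.2
  apply hInd
  constructor
  · intro z hz
    obtain ⟨B, hB, hzB⟩ := hz
    exact (hP.1 B (hRP hB)).1 hzB
  · intro v hvV hvI
    have hnot : ∀ x ∈ ⋃₀ R, ({v, x} : Set α) ∉ P := by
      intro x hx hmem
      obtain ⟨B, hB, hxB⟩ := hx
      have heq : ({v, x} : Set α) = B := by
        by_contra hne
        exact (Set.disjoint_left.mp (hP.2 _ hmem _ (hRP hB) hne)
          (Set.mem_insert_of_mem _ rfl) hxB)
      exact hvI ⟨B, hB, heq ▸ Set.mem_insert _ _⟩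
    rcases hI.1.2 v ⟨hvV, hvI⟩ with h | h
    · left
      intro x hx
      exact Or.inl ⟨h x hx, hnot x hx⟩
    · right
      intro x hx
      refine Or.inl ⟨h x hx, ?_⟩
      rw [Set.pair_comm]
      exact hnot x hx

end AuxStmt1

/-- Corollary 1. For a finite totally ordered set `V` of even size
`|V| ≥ 6` and a pairing `P` of `V` (so `⋃₀ P = V`), the pairing `P` is irreducible iff
the tournament `Inv(underline(V), P)` is indecomposable. -/
theorem stmt_1 {α : Type*} [LinearOrder α] (V : Set α) (hVfin : V.Finite)
    (hVcard : 6 ≤ V.ncard) (hVeven : Even V.ncard)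
    (P : Set (Set α)) (hP : IsPartialPairingOn V P) (hcover : ⋃₀ P = V) :
    IrreducibleOn V P ↔ IndecomposableOn P V := by
  classical
  have hpair : ∀ x ∈ V, ∃ y, ({x, y} : Set α) ∈ P := by
    intro x hx
    rw [← hcover] at hx
    obtain ⟨B, hB, hxB⟩ := hx
    obtain ⟨u, v, huv, rfl⟩ := Set.ncard_eq_two.mp (hP.1 B hB).2
    rcases hxB with rfl | hxB
    · exact ⟨v, hB⟩
    · rw [Set.mem_singleton_iff] at hxB
      subst hxB
      exact ⟨u, by rwa [Set.pair_comm]⟩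
  have huniq : ∀ x y z : α, ({x, y} : Set α) ∈ P → ({x, z} : Set α) ∈ P → y = z := by
    intro x y z hy hz
    have hyx : y ≠ x := by
      rintro rfl
      have h2 := (hP.1 _ hy).2
      rw [Set.pair_eq_singleton, Set.ncard_singleton] at h2
      omega
    have hzx : z ≠ x := by
      rintro rfl
      have h2 := (hP.1 _ hz).2
      rw [Set.pair_eq_singleton, Set.ncard_singleton] at h2
      omega
    have heq : ({x, y} : Set α) = {x, z} := by
      by_contra hne
      exact (Set.disjoint_left.mp (hP.2 _ hy _ hz hne) (Set.mem_insert _ _))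
        (Set.mem_insert _ _)
    have hmem : y ∈ ({x, z} : Set α) := heq ▸ Set.mem_insert_of_mem _ rfl
    rcases hmem with h | h
    · exact absurd h hyx
    · rwa [Set.mem_singleton_iff] at h
  set p : α → α := fun x => if h : ∃ y, ({x, y} : Set α) ∈ P then h.choose else x with hpdef
  have hg : GoodPairing V P p := by
    intro x hx
    obtain ⟨y, hy⟩ := hpair x hx
    have hex : ∃ y, ({x, y} : Set α) ∈ P := ⟨y, hy⟩
    have hpx : ({x, p x} : Set α) ∈ P := by
      simp only [hpdef, dif_pos hex]
      exact hex.choose_spec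
    refine ⟨(hP.1 _ hpx).1 (Set.mem_insert_of_mem _ rfl), ?_, ?_⟩
    · intro h
      have h2 := (hP.1 _ hpx).2
      rw [h, Set.pair_eq_singleton, Set.ncard_singleton] at h2
      omega
    · intro z
      constructor
      · intro hz
        exact huniq x z (p x) hz hpx
      · rintro rfl
        exact hpx
  constructor
  · intro hirr M hMod
    by_contra hnt
    obtain ⟨R, hRP, hI⟩ := hard_direction hg hVcard hVfin ⟨hMod, hnt⟩
    exact hirr R hRP hI
  · intro hInd
    exact easy_direction hP hInd
end

section
/- Let n ≥ 5, let V = {0,1,…,n−1} with the natural order, let Q be a partial quasi-pairing of V, and set T := Inv(underline(n), Q). Then T is indecomposable if and only if all of the following hold: (C1) ∪Q is a transversal of mc(underline(n)) and Q is an irreducible quasi-pairing of ∪Q; (C2) v_Q^+ ≥ v_Q^- + 2; (C3) for every v, if both {v, v+2} ∈ Q and {v+1, v+3} ∈ Q, then v̂_Q ∈ {v, v+3}; (C4) for every v, if {v, v+1} ∈ Q, then v̂_Q ∈ {v, v+1} and both v̂_Q − 1 ∈ ∪Q and v̂_Q + 1 ∈ ∪Q (in particular v̂_Q ∉ {0,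 n−1}). -/
/-!
Double counting shows that every vertex of `⋃₀ Q` has exactly one partner, except `v̂`, whose
partners are `v⁻` and `v⁺`. A set `M` is a module of `T` iff every vertex outside `M` is paired
either with exactly the elements of `M` below it or with exactly those above it.

If one of the conditions fails, there is a nontrivial module: a pair `{x, y}`, the complement of
a vertex that dominates or is dominated by all others, or, when (C1) fails, a set that no block
of `Q` crosses and that is a nontrivial module of the transitive tournament.

Conversely, let `M` be a nontrivial module with least element `a` and greatest element `b`. If
`[a, b]` is closed under pairing, irreducibility and the transversal condition force
`[a, b] = V`; otherwise `v̂` lies in `[a, b]` outside `M` with a partner beyond `[a, b]`. In both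
cases the partners of the vertices outside `M` pin `M` down to `{a, b}`, and a two-element module
other than `{v⁻, v⁺}` contradicts (C2)–(C4) by a short case analysis.
-/

open Set

section Pairs

variable {α : Type*}

def Paired (P : Set (Set α)) (x y : α) : Prop := ({x, y} : Set α) ∈ P

theorem Paired.symm {P : Set (Set α)} {x y : α} (h : Paired P x y) : Paired P y x := by
  rwa [Paired, Set.pair_comm]

theorem paired_comm {P : Set (Set α)} {x y : α} : Paired P x y ↔ Paired P y x :=
  ⟨Paired.symm, Paired.symm⟩

def PairClosed (P : Set (Set α)) (X : Set α) : Prop :=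
  ∀ x ∈ X, ∀ y, Paired P x y → y ∈ X

end Pairs

section Modules

variable {α : Type*} [LinearOrder α] {P : Set (Set α)} {W M : Set α}

theorem invArc_iff_paired_iff {v x : α} (hvx : v ≠ x) :
    InvArc P v x ↔ (Paired P v x ↔ x < v) := by
  rcases hvx.lt_or_gt with h | h <;> simp [InvArc, Paired, h, h.not_gt]

theorem invArc_iff_paired_iff' {v x : α} (hvx : v ≠ x) :
    InvArc P x v ↔ (Paired P v x ↔ v < x) := by
  rcases hvx.lt_or_gt with h | h <;> simp [InvArc, Paired, Set.pair_comm x v, h, h.not_gt]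

/-- The left alternative says that `v` dominates `M`, the right one that `M` dominates `v`. -/
theorem isModuleOn_iff_paired :
    IsModuleOn P W M ↔ M ⊆ W ∧ ∀ v ∈ W, v ∉ M →
      (∀ x ∈ M, Paired P v x ↔ x < v) ∨ (∀ x ∈ M, Paired P v x ↔ v < x) := by
  refine and_congr_right fun _ => forall₂_congr fun v _ => forall_congr' fun hv => ?_
  refine or_congr (forall₂_congr fun x hx => ?_) (forall₂_congr fun x hx => ?_)
  · exact invArc_iff_paired_iff (ne_of_mem_of_not_mem hx hv).symm
  · exact invArc_iff_paired_iff' (ne_of_mem_of_not_mem hx hv).symm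

theorem IsModuleOn.paired_iff (hM : IsModuleOn P W M) {v : α} (hvW : v ∈ W) (hvM : v ∉ M) :
    (∀ x ∈ M, Paired P v x ↔ x < v) ∨ (∀ x ∈ M, Paired P v x ↔ v < x) :=
  (isModuleOn_iff_paired.1 hM).2 v hvW hvM

theorem isModuleOn_pair_iff {x y : α} :
    IsModuleOn P W {x, y} ↔ x ∈ W ∧ y ∈ W ∧ ∀ v ∈ W, v ≠ x → v ≠ y →
      ((Paired P v x ↔ x < v) ∧ (Paired P v y ↔ y < v)) ∨
      ((Paired P v x ↔ v < x) ∧ (Paired P v y ↔ v < y)) := by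
  simp [isModuleOn_iff_paired, Set.insert_subset_iff, and_assoc]

theorem IsModuleOn.paired_or_paired (hM : IsModuleOn P W M) {a b w : α} (ha : a ∈ M)
    (hb : b ∈ M) (haw : a < w) (hwb : w < b) (hwW : w ∈ W) (hwM : w ∉ M) :
    Paired P w a ∨ Paired P w b := by
  rcases hM.paired_iff hwW hwM with h | h
  · exact .inl ((h a ha).2 haw)
  · exact .inr ((h b hb).2 hwb)

theorem PairClosed.isModuleOn_iff (hM : PairClosed P M) :
    IsModuleOn P W M ↔ IsIntervalOf W M := by
  have h : ∀ v ∉ M, ∀ x ∈ M, ¬ Paired P v x := fun v hv x hx hvx => hv (hM x hx v hvx.symm)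
  rw [isModuleOn_iff_paired, IsIntervalOf]
  refine and_congr_right fun _ => ?_
  simp only [Set.mem_sdiff, and_imp]
  refine forall₂_congr fun v _ => forall_congr' fun hv => ?_
  refine or_congr (forall₂_congr fun x hx => ?_) (forall₂_congr fun x hx => ?_) <;>
    rcases lt_or_gt_of_ne (ne_of_mem_of_not_mem hx hv) with hxv | hxv <;>
    simp [h v hv x hx, hxv, hxv.not_gt]

theorem isModuleOn_empty_iff : IsModuleOn ∅ W M ↔ IsIntervalOf W M :=
  PairClosed.isModuleOn_iff fun _ _ _ h => h.elim

end Modules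

section Intervals

variable {α : Type*} [LinearOrder α] {W : Set α}

theorem isIntervalOf_Icc {c d : α} (h : Set.Icc c d ⊆ W) : IsIntervalOf W (Set.Icc c d) := by
  refine ⟨h, fun v hv => ?_⟩
  simp only [Set.mem_sdiff, Set.mem_Icc, not_and_or, not_le] at hv
  rcases hv.2 with h | h
  · exact .inl fun i hi => h.trans_le hi.1
  · exact .inr fun i hi => hi.2.trans_lt h

theorem isIntervalOf_inter_Icc {c d : α} : IsIntervalOf W (W ∩ Set.Icc c d) := by
  refine ⟨Set.inter_subset_left, fun v hv => ?_⟩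
  simp only [Set.mem_sdiff, Set.mem_inter_iff, Set.mem_Icc, not_and_or, not_le, hv.1,
    not_true, false_or] at hv
  rcases hv.2 with h | h
  · exact .inl fun i hi => h.trans_le hi.2.1
  · exact .inr fun i hi => hi.2.2.trans_lt h

end Intervals

theorem exists_subset_Icc {n : ℕ} {M : Set ℕ} (hM : M ⊆ Set.Iio n) (hne : M.Nonempty) :
    ∃ c ∈ M, ∃ d ∈ M, M ⊆ Set.Icc c d :=
  have hbdd : BddAbove M := ⟨n, fun _ hx => (hM hx).le⟩
  ⟨sInf M, Nat.sInf_mem hne, sSup M, Nat.sSup_mem hne hbdd,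
    fun _ hx => ⟨Nat.sInf_le hx, le_csSup hbdd hx⟩⟩

section Trivial

variable {α : Type*} {W M : Set α}

theorem not_isTrivialSubset_of {x y z : α} (hx : x ∈ M) (hy : y ∈ M) (hxy : x ≠ y)
    (hz : z ∈ W) (hzM : z ∉ M) : ¬ IsTrivialSubset W M := by
  rintro (rfl | ⟨a, rfl⟩ | rfl)
  · exact hx
  · exact hxy (hx.trans hy.symm)
  · exact hzM hz

theorem exists_of_not_isTrivialSubset (h : ¬ IsTrivialSubset W M) (hM : M ⊆ W) :
    (∃ x ∈ M, ∃ y ∈ M, x ≠ y) ∧ ∃ z ∈ W, z ∉ M := by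
  simp only [IsTrivialSubset, not_or, not_exists, ← Set.nonempty_iff_ne_empty] at h
  obtain ⟨⟨x, hx⟩, hsingle, hW⟩ := h
  refine ⟨?_, Set.exists_of_ssubset (hM.ssubset_of_ne hW)⟩
  by_contra! hsub
  exact hsingle x (Set.eq_singleton_iff_unique_mem.2 ⟨hx, fun y hy => hsub y hy x hx⟩)

end Trivial

theorem exists_lt_ne_ne {n : ℕ} (hn : 3 ≤ n) (x y : ℕ) : ∃ z < n, z ≠ x ∧ z ≠ y := by
  by_cases h0 : x = 0 ∨ y = 0
  · by_cases h1 : x = 1 ∨ y = 1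
    · exact ⟨2, by omega, by omega, by omega⟩
    · exact ⟨1, by omega, by omega, by omega⟩
  · exact ⟨0, by omega, by omega, by omega⟩

section Indecomposable

variable {P : Set (Set ℕ)} {n : ℕ}

theorem IndecomposableOn.not_isModuleOn_pair (h : IndecomposableOn P (Set.Iio n)) (hn : 3 ≤ n)
    {x y : ℕ} (hxy : x ≠ y) : ¬ IsModuleOn P (Set.Iio n) {x, y} := fun hM => by
  obtain ⟨z, hz, hzx, hzy⟩ := exists_lt_ne_ne hn x y
  exact not_isTrivialSubset_of (by simp) (by simp) hxy (Set.mem_Iio.2 hz) (by simp [hzx, hzy])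
    (h _ hM)

theorem IndecomposableOn.not_isModuleOn_diff_singleton (h : IndecomposableOn P (Set.Iio n))
    (hn : 3 ≤ n) {x : ℕ} (hx : x < n) : ¬ IsModuleOn P (Set.Iio n) (Set.Iio n \ {x}) :=
  fun hM => by
  obtain ⟨y, hy, hyx, -⟩ := exists_lt_ne_ne hn x x
  obtain ⟨z, hz, hzx, hzy⟩ := exists_lt_ne_ne hn x y
  exact not_isTrivialSubset_of (x := y) (y := z) (by simp [hy, hyx]) (by simp [hz, hzx])
    (Ne.symm hzy) (Set.mem_Iio.2 hx) (by simp) (h _ hM)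

end Indecomposable

section MinimalCoModules

variable {n : ℕ}

theorem not_isCoModuleOn_empty {α : Type*} [LinearOrder α] {W : Set α} :
    ¬ IsCoModuleOn (∅ : Set (Set α)) W ∅ := by
  rintro ⟨-, h | h⟩
  · exact h.2 (.inl rfl)
  · exact h.2 (.inr (.inr Set.sdiff_empty))

theorem singleton_mem_mcOn {α : Type*} [LinearOrder α] {W : Set α} {x : α}
    (h : IsCoModuleOn (∅ : Set (Set α)) W {x}) : {x} ∈ mcOn W := by
  refine ⟨h, fun C hC hCx => ?_⟩
  rcases Set.subset_singleton_iff_eq.1 hCx with rfl | rfl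
  · exact absurd hC not_isCoModuleOn_empty
  · rfl

theorem isCoModuleOn_iff_isIntervalOf {C : Set ℕ} (hC : C ⊆ Set.Iio n) :
    IsCoModuleOn (∅ : Set (Set ℕ)) (Set.Iio n) C ↔
      (IsIntervalOf (Set.Iio n) C ∧ ¬ IsTrivialSubset (Set.Iio n) C) ∨
      (IsIntervalOf (Set.Iio n) (Set.Iio n \ C) ∧
        ¬ IsTrivialSubset (Set.Iio n) (Set.Iio n \ C)) := by
  simp [IsCoModuleOn, IsNontrivialModuleOn, isModuleOn_empty_iff, hC]

theorem not_isCoModuleOn_singleton {i : ℕ} (hi : 0 < i) (hin : i + 1 < n) :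
    ¬ IsCoModuleOn (∅ : Set (Set ℕ)) (Set.Iio n) {i} := by
  rw [isCoModuleOn_iff_isIntervalOf (by simp; omega)]
  rintro (⟨-, h⟩ | ⟨⟨-, h⟩, -⟩)
  · exact h (.inr (.inl ⟨i, rfl⟩))
  · rcases h i (by simp; omega) with h | h
    · exact absurd (h (i - 1) (by simp; omega)) (by omega)
    · exact absurd (h (i + 1) (by simp; omega)) (by omega)

theorem singleton_zero_mem_mcOn (hn : 3 ≤ n) : ({0} : Set ℕ) ∈ mcOn (Set.Iio n) := by
  refine singleton_mem_mcOn ((isCoModuleOn_iff_isIntervalOf (by simp; omega)).2 (.inr ⟨?_, ?_⟩))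
  · refine ⟨Set.sdiff_subset, fun v hv => .inl fun x hx => ?_⟩
    simp_all
    omega
  · exact not_isTrivialSubset_of (x := 1) (y := 2) (z := 0) (by simp; omega) (by simp; omega)
      (by simp) (by simp; omega) (by simp)

theorem singleton_last_mem_mcOn (hn : 3 ≤ n) : ({n - 1} : Set ℕ) ∈ mcOn (Set.Iio n) := by
  refine singleton_mem_mcOn ((isCoModuleOn_iff_isIntervalOf (by simp; omega)).2 (.inr ⟨?_, ?_⟩))
  · refine ⟨Set.sdiff_subset, fun v hv => .inr fun x hx => ?_⟩
    simp_all
    omega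
  · exact not_isTrivialSubset_of (x := 0) (y := 1) (z := n - 1) (by simp; omega)
      (by simp; omega) (by simp) (by simp; omega) (by simp)

theorem pair_mem_mcOn (hn : 3 ≤ n) {i : ℕ} (hi : 0 < i) (hin : i + 2 < n) :
    ({i, i + 1} : Set ℕ) ∈ mcOn (Set.Iio n) := by
  have hsub : ({i, i + 1} : Set ℕ) ⊆ Set.Iio n := by
    simp [Set.insert_subset_iff]; omega
  refine ⟨(isCoModuleOn_iff_isIntervalOf hsub).2 (.inl ⟨⟨hsub, fun v hv => ?_⟩, ?_⟩), ?_⟩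
  · simp at hv
    rcases lt_or_gt_of_ne hv.2.1 with h | h
    · exact .inl (by simp; omega)
    · exact .inr (by simp; omega)
  · obtain ⟨z, hz, hzi, hzi'⟩ := exists_lt_ne_ne hn i (i + 1)
    exact not_isTrivialSubset_of (x := i) (y := i + 1) (by simp) (by simp) (by omega)
      (Set.mem_Iio.2 hz) (by simp [hzi, hzi'])
  · intro C hC hCi
    rcases Set.subset_pair_iff_eq.1 hCi with rfl | rfl | rfl | rfl
    · exact absurd hC not_isCoModuleOn_empty
    · exact absurd hC (not_isCoModuleOn_singleton hi (by omega))
    · exact absurd hC (not_isCoModuleOn_singleton (by omega) (by omega))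
    · rfl

theorem TransversalOf.inter_Icc_nonempty {S : Set ℕ} (hS : TransversalOf S (mcOn (Set.Iio n)))
    (hn : 3 ≤ n) {c d : ℕ} (hcd : c < d) (hd : d < n) : (S ∩ Set.Icc c d).Nonempty := by
  by_cases hc : c = 0
  · obtain ⟨x, hxS, rfl⟩ := hS _ (singleton_zero_mem_mcOn hn)
    exact ⟨0, hxS, by simp; omega⟩
  · by_cases hd' : d = n - 1
    · obtain ⟨x, hxS, rfl⟩ := hS _ (singleton_last_mem_mcOn hn)
      exact ⟨n - 1, hxS, by simp; omega⟩
    · obtain ⟨x, hxS, hx⟩ := hS _ (pair_mem_mcOn hn (i := c) (by omega) (by omega))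
      exact ⟨x, hxS, by simp at hx ⊢; omega⟩

end MinimalCoModules

section DegreeCounting

open Finset

theorem add_le_three_of_sum_le {ι : Type*} [DecidableEq ι] {s : Finset ι} {f : ι → ℕ}
    (h1 : ∀ i ∈ s, 1 ≤ f i) (hsum : ∑ i ∈ s, f i ≤ #s + 1) {i j : ι} (hi : i ∈ s) (hj : j ∈ s)
    (hij : i ≠ j) : f i + f j ≤ 3 := by
  have hj' : j ∈ s.erase i := mem_erase.2 ⟨hij.symm, hj⟩
  have hrest : #((s.erase i).erase j) ≤ ∑ k ∈ (s.erase i).erase j, f k := by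
    simpa using card_nsmul_le_sum ((s.erase i).erase j) f 1
      fun k hk => h1 k (mem_of_mem_erase (mem_of_mem_erase hk))
  rw [← add_sum_erase s f hi, ← add_sum_erase _ f hj'] at hsum
  have := card_erase_of_mem hj'
  have := card_erase_of_mem hi
  have := card_pos.2 ⟨i, hi⟩
  omega

open Classical in
theorem sum_card_filter_mem {α : Type*} (𝒬 : Finset (Set α)) (S : Finset α)
    (h : ∀ B ∈ 𝒬, B ⊆ S) : ∑ x ∈ S, #{B ∈ 𝒬 | x ∈ B} = ∑ B ∈ 𝒬, B.ncard := by
  have := sum_card_bipartiteAbove_eq_sum_card_bipartiteBelow (s := S) (t := 𝒬) (r := (· ∈ ·))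
  simp only [bipartiteAbove, bipartiteBelow] at this
  rw [this]
  refine sum_congr rfl fun B hB => ?_
  rw [← Set.ncard_coe_finset, coe_filter]
  congr 1
  ext x
  simpa using fun hx => h B hB hx

/-- Every covered point has degree at least one, and the degrees add up to
`2 * Q.ncard ≤ (⋃₀ Q).ncard + 1`. -/
theorem ncard_sep_mem_add_le_three {α : Type*} {Q : Set (Set α)} (hQ : Q.Finite)
    (h2 : ∀ B ∈ Q, B.ncard = 2) (hcard : 2 * Q.ncard ≤ (⋃₀ Q).ncard + 1) {x y : α}
    (hx : x ∈ ⋃₀ Q) (hy : y ∈ ⋃₀ Q) (hxy : x ≠ y) :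
    {B ∈ Q | x ∈ B}.ncard + {B ∈ Q | y ∈ B}.ncard ≤ 3 := by
  classical
  have hS : (⋃₀ Q).Finite :=
    hQ.sUnion fun B hB => Set.finite_of_ncard_pos (by rw [h2 B hB]; norm_num)
  have hdeg (z : α) : {B ∈ Q | z ∈ B}.ncard = #{B ∈ hQ.toFinset | z ∈ B} := by
    rw [← Set.ncard_coe_finset]
    simp
  rw [hdeg, hdeg]
  refine add_le_three_of_sum_le (f := fun z => #{B ∈ hQ.toFinset | z ∈ B}) (fun z hz => ?_) ?_
    (hS.mem_toFinset.2 hx) (hS.mem_toFinset.2 hy) hxy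
  · obtain ⟨B, hBQ, hzB⟩ := hS.mem_toFinset.1 hz
    exact card_pos.2 ⟨B, by simp [hBQ, hzB]⟩
  · rw [sum_card_filter_mem _ _ fun B hB z hz => by simp at hB ⊢; exact ⟨B, hB, hz⟩,
      sum_congr rfl fun B hB => h2 B (by simpa using hB), ← Set.ncard_eq_toFinset_card _ hS]
    simpa [← Set.ncard_eq_toFinset_card _ hQ, mul_comm] using hcard

end DegreeCounting

/-- The combinatorics of a partial quasi-pairing `Q` of `Iio n` with data `(vh, vm, vp)`: every
vertex of `⋃₀ Q` has exactly one partner, except `vh`, whose partners are `vm` and `vp`. -/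
structure QuasiPairing (n : ℕ) (Q : Set (Set ℕ)) (vh vm vp : ℕ) : Prop where
  paired_vm : Paired Q vh vm
  paired_vp : Paired Q vh vp
  vm_lt_vp : vm < vp
  ne_of_paired {x y : ℕ} : Paired Q x y → x ≠ y
  lt_of_paired {x y : ℕ} : Paired Q x y → x < n
  eq_of_paired {x y z : ℕ} : Paired Q x y → Paired Q x z → x ≠ vh → y = z
  eq_or_eq_of_paired_vh {y : ℕ} : Paired Q vh y → y = vm ∨ y = vp
  exists_eq_pair {B : Set ℕ} : B ∈ Q → ∃ x y, B = {x, y}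

/-- `vh` has degree at least two, so every other vertex has degree one and `vh` degree two. -/
theorem quasiPairing_of {n : ℕ} {Q : Set (Set ℕ)} {vh vm vp : ℕ}
    (hQ : IsPartialQuasiPairingOn (Set.Iio n) Q) (hdata : QPData Q vh vm vp) :
    QuasiPairing n Q vh vm vp := by
  obtain ⟨hQB, m, -, hS, hQc⟩ := hQ
  obtain ⟨hvm, hvp, hlt⟩ : Paired Q vh vm ∧ Paired Q vh vp ∧ vm < vp := hdata
  have hQf : Q.Finite := Set.finite_of_ncard_ne_zero (by omega)
  have hdeg {x y : ℕ} := ncard_sep_mem_add_le_three (x := x) (y := y) hQf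
    (fun B hB => (hQB B hB).2) (by omega)
  have ne_of_paired {x y : ℕ} (h : Paired Q x y) : x ≠ y := by
    rintro rfl
    simpa [Paired] using (hQB _ h).2
  have hmem {x y : ℕ} (h : Paired Q x y) : x ∈ ⋃₀ Q := ⟨_, h, by simp⟩
  have hsep {x y : ℕ} (h : Paired Q x y) : {x, y} ∈ {B ∈ Q | x ∈ B} := ⟨h, by simp⟩
  have two_le_deg {x y z : ℕ} (hy : Paired Q x y) (hz : Paired Q x z) (hyz : y ≠ z) :
      2 ≤ {B ∈ Q | x ∈ B}.ncard := by
    rw [← Set.ncard_pair (by simp [Set.pair_eq_pair_iff, hyz, (ne_of_paired hy).symm] :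
      ({x, y} : Set ℕ) ≠ {x, z})]
    exact Set.ncard_le_ncard (by simp [Set.insert_subset_iff, hsep hy, hsep hz])
      (hQf.subset (Set.sep_subset _ _))
  refine ⟨hvm, hvp, hlt, ne_of_paired, fun h => Set.mem_Iio.1 ((hQB _ h).1 (by simp)), ?_, ?_,
    fun hB => ?_⟩
  · intro x y z hy hz hx
    by_contra hyz
    have := hdeg (hmem hy) (hmem hvm) hx
    have := two_le_deg hy hz hyz
    have := two_le_deg hvm hvp hlt.ne
    omega
  · intro y hy
    by_contra! h
    have h₁ := ne_of_paired hvm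
    have h₂ := ne_of_paired hvp
    have h₃ := ne_of_paired hy
    have h3 : 3 ≤ {B ∈ Q | vh ∈ B}.ncard := by
      rw [← Set.ncard_eq_three.2 ⟨{vh, vm}, {vh, vp}, {vh, y},
        by rw [Ne, Set.pair_eq_pair_iff]; omega, by rw [Ne, Set.pair_eq_pair_iff]; omega,
        by rw [Ne, Set.pair_eq_pair_iff]; omega, rfl⟩]
      exact Set.ncard_le_ncard (by simp [Set.insert_subset_iff, hsep hvm, hsep hvp, hsep hy])
        (hQf.subset (Set.sep_subset _ _))
    have := hdeg (hmem hvm) (hmem hvm.symm) (ne_of_paired hvm)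
    have := (Set.ncard_pos (hQf.subset (Set.sep_subset _ _))).2 ⟨_, hsep hvm.symm⟩
    omega
  · obtain ⟨x, y, -, rfl⟩ := Set.ncard_eq_two.1 (hQB _ hB).2
    exact ⟨x, y, rfl⟩

namespace QuasiPairing

variable {n : ℕ} {Q : Set (Set ℕ)} {vh vm vp : ℕ}

theorem mem_sUnion_iff (K : QuasiPairing n Q vh vm vp) {x : ℕ} :
    x ∈ ⋃₀ Q ↔ ∃ y, Paired Q x y := by
  refine ⟨fun ⟨B, hBQ, hxB⟩ => ?_, fun ⟨y, hy⟩ => ⟨_, hy, by simp⟩⟩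
  obtain ⟨u, v, rfl⟩ := K.exists_eq_pair hBQ
  rcases hxB with rfl | rfl
  · exact ⟨v, hBQ⟩
  · exact ⟨u, Paired.symm hBQ⟩

theorem mem_sUnion (K : QuasiPairing n Q vh vm vp) {x y : ℕ} (h : Paired Q x y) : x ∈ ⋃₀ Q :=
  K.mem_sUnion_iff.2 ⟨y, h⟩

theorem lt_of_paired' (K : QuasiPairing n Q vh vm vp) {x y : ℕ} (h : Paired Q x y) : y < n :=
  K.lt_of_paired h.symm

theorem sUnion_subset_Iio (K : QuasiPairing n Q vh vm vp) : ⋃₀ Q ⊆ Set.Iio n := fun _ hx => by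
  obtain ⟨y, hxy⟩ := K.mem_sUnion_iff.1 hx
  exact K.lt_of_paired hxy

theorem lt_of_mem_sUnion (K : QuasiPairing n Q vh vm vp) {x : ℕ} (hx : x ∈ ⋃₀ Q) : x < n :=
  K.sUnion_subset_Iio hx

theorem vh_ne_vm (K : QuasiPairing n Q vh vm vp) : vh ≠ vm := K.ne_of_paired K.paired_vm

theorem vh_ne_vp (K : QuasiPairing n Q vh vm vp) : vh ≠ vp := K.ne_of_paired K.paired_vp

theorem paired_iff (K : QuasiPairing n Q vh vm vp) {x y z : ℕ} (h : Paired Q x y)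
    (hx : x ≠ vh) : Paired Q x z ↔ z = y :=
  ⟨fun hz => K.eq_of_paired hz h hx, fun hz => hz ▸ h⟩

theorem paired_iff' (K : QuasiPairing n Q vh vm vp) {x y z : ℕ} (h : Paired Q x y)
    (hx : x ≠ vh) : Paired Q z x ↔ z = y :=
  paired_comm.trans (K.paired_iff h hx)

theorem paired_vh_iff (K : QuasiPairing n Q vh vm vp) {y : ℕ} :
    Paired Q vh y ↔ y = vm ∨ y = vp :=
  ⟨K.eq_or_eq_of_paired_vh, by rintro (rfl | rfl); exacts [K.paired_vm, K.paired_vp]⟩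

theorem paired_vm_iff (K : QuasiPairing n Q vh vm vp) {z : ℕ} : Paired Q z vm ↔ z = vh :=
  K.paired_iff' K.paired_vm.symm K.vh_ne_vm.symm

theorem paired_vp_iff (K : QuasiPairing n Q vh vm vp) {z : ℕ} : Paired Q z vp ↔ z = vh :=
  K.paired_iff' K.paired_vp.symm K.vh_ne_vp.symm

theorem eq_vh_of_paired (K : QuasiPairing n Q vh vm vp) {x y z : ℕ} (hy : Paired Q x y)
    (hz : Paired Q x z) (hyz : y ≠ z) : x = vh := by
  by_contra hx
  exact hyz (K.eq_of_paired hy hz hx)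

theorem pairClosed_sUnion (K : QuasiPairing n Q vh vm vp) {R : Set (Set ℕ)}
    (hR : R ⊆ QPart Q vh vm vp) : PairClosed Q (⋃₀ R) := by
  rintro x ⟨B, hBR, hxB⟩ y hxy
  refine ⟨B, hBR, ?_⟩
  rcases hR hBR with ⟨hBQ, hB⟩ | rfl
  · obtain ⟨u, v, rfl⟩ := K.exists_eq_pair hBQ
    have hvh : x ≠ vh := by
      rintro rfl
      rcases hxB with rfl | rfl
      · rcases K.eq_or_eq_of_paired_vh hBQ with rfl | rfl <;> simp at hB
      · rcases K.eq_or_eq_of_paired_vh (Paired.symm hBQ) with rfl | rfl <;>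
          simp [Set.pair_comm] at hB
    rcases hxB with rfl | rfl
    · simp [K.eq_of_paired hxy hBQ hvh]
    · simp [K.eq_of_paired hxy (Paired.symm hBQ) hvh]
  · rcases hxB with rfl | rfl | rfl
    · rcases K.eq_or_eq_of_paired_vh hxy with rfl | rfl <;> simp
    · simp [K.paired_iff' K.paired_vm.symm K.vh_ne_vm.symm |>.1 hxy.symm]
    · simp [K.paired_iff' K.paired_vp.symm K.vh_ne_vp.symm |>.1 hxy.symm]

theorem exists_sUnion_eq (K : QuasiPairing n Q vh vm vp) {X : Set ℕ} (hXS : X ⊆ ⋃₀ Q)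
    (hX : PairClosed Q X) : ∃ R ⊆ QPart Q vh vm vp, ⋃₀ R = X := by
  refine ⟨{B ∈ QPart Q vh vm vp | B ⊆ X}, fun B hB => hB.1,
    (Set.sUnion_subset fun B hB => hB.2).antisymm fun x hx => ?_⟩
  obtain ⟨y, hxy⟩ := K.mem_sUnion_iff.1 (hXS hx)
  by_cases hB : x = vh ∨ x = vm ∨ x = vp
  · have hvh : vh ∈ X := by
      rcases hB with rfl | rfl | rfl
      exacts [hx, hX _ hx _ K.paired_vm.symm, hX _ hx _ K.paired_vp.symm]
    refine ⟨{vh, vm, vp}, Set.mem_sep (.inr rfl) ?_, by simpa using hB⟩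
    simp [Set.insert_subset_iff, hvh, hX _ hvh _ K.paired_vm, hX _ hvh _ K.paired_vp]
  · push Not at hB
    refine ⟨{x, y}, Set.mem_sep (.inl ⟨hxy, ?_⟩) ?_, by simp⟩
    · simp [Set.pair_eq_pair_iff, hB.1, hB.2.1, hB.2.2]
    · simp [Set.insert_subset_iff, hx, hX _ hx _ hxy]

theorem vm_add_two_le_vp (K : QuasiPairing n Q vh vm vp) (hn : 3 ≤ n)
    (hInd : IndecomposableOn Q (Set.Iio n)) : vm + 2 ≤ vp := by
  by_contra h
  refine hInd.not_isModuleOn_pair hn K.vm_lt_vp.ne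
    (isModuleOn_pair_iff.2 ⟨K.lt_of_paired' K.paired_vm, K.lt_of_paired' K.paired_vp,
      fun v _ hvm hvp => ?_⟩)
  rw [K.paired_vm_iff, K.paired_vp_iff]
  have := K.vm_lt_vp
  have := K.vh_ne_vm
  have := K.vh_ne_vp
  omega

theorem vh_eq_or_eq_of_paired_add_two (K : QuasiPairing n Q vh vm vp) (hn : 3 ≤ n)
    (hInd : IndecomposableOn Q (Set.Iio n)) {v : ℕ} (h₁ : Paired Q v (v + 2))
    (h₂ : Paired Q (v + 1) (v + 3)) : vh = v ∨ vh = v + 3 := by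
  by_contra! h
  refine hInd.not_isModuleOn_pair hn (by omega : v ≠ v + 3)
    (isModuleOn_pair_iff.2 ⟨K.lt_of_paired h₁, K.lt_of_paired' h₂, fun w _ hw hw' => ?_⟩)
  rw [K.paired_iff' h₁ h.1.symm, K.paired_iff' h₂.symm h.2.symm]
  omega

theorem vh_eq_or_eq_of_paired_succ (K : QuasiPairing n Q vh vm vp) (hn : 3 ≤ n)
    (hInd : IndecomposableOn Q (Set.Iio n)) {v : ℕ} (h : Paired Q v (v + 1)) :
    vh = v ∨ vh = v + 1 := by
  by_contra! hv
  refine hInd.not_isModuleOn_pair hn (by omega : v ≠ v + 1)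
    (isModuleOn_pair_iff.2 ⟨K.lt_of_paired h, K.lt_of_paired' h, fun w _ hw hw' => ?_⟩)
  rw [K.paired_iff' h hv.1.symm, K.paired_iff' h.symm hv.2.symm]
  omega

/-- If `vh = 0` is paired with `1`, then `1` dominates every other vertex. -/
theorem one_le_vh_of_paired_succ (K : QuasiPairing n Q vh vm vp) (hn : 3 ≤ n)
    (hInd : IndecomposableOn Q (Set.Iio n)) {v : ℕ} (h : Paired Q v (v + 1)) : 1 ≤ vh := by
  by_contra hvh
  obtain rfl : v = 0 := by have := K.vh_eq_or_eq_of_paired_succ hn hInd h; omega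
  refine hInd.not_isModuleOn_diff_singleton hn (x := 1) (by omega)
    (isModuleOn_iff_paired.2 ⟨Set.sdiff_subset, fun w hw hwM => .inl fun x hx => ?_⟩)
  obtain rfl : w = 1 := by_contra fun hne => hwM ⟨hw, hne⟩
  rw [K.paired_iff h.symm (by omega)]
  simp at hx
  omega

theorem isModuleOn_pred_succ (K : QuasiPairing n Q vh vm vp) (h1 : 1 ≤ vh) (hn : vh + 1 < n)
    (h : Paired Q vh (vh - 1) ∧ vh + 1 ∉ ⋃₀ Q ∨ Paired Q vh (vh + 1) ∧ vh - 1 ∉ ⋃₀ Q) :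
    IsModuleOn Q (Set.Iio n) {vh - 1, vh + 1} := by
  refine isModuleOn_pair_iff.2 ⟨by simp; omega, by simpa using hn, fun w _ hw hw' => ?_⟩
  have hnot {x : ℕ} (hx : x ∉ ⋃₀ Q) : ¬ Paired Q w x := fun hwx => hx (K.mem_sUnion hwx.symm)
  rcases h with ⟨h, hS⟩ | ⟨h, hS⟩
  · have hvh : vh - 1 ≠ vh := by omega
    rw [K.paired_iff' h.symm hvh, iff_false_intro (hnot hS), false_iff, false_iff]
    omega
  · have hvh : vh + 1 ≠ vh := by omega
    rw [K.paired_iff' h.symm hvh, iff_false_intro (hnot hS), false_iff, false_iff]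
    omega

theorem pred_vh_mem_sUnion (K : QuasiPairing n Q vh vm vp) (hn : 3 ≤ n)
    (hInd : IndecomposableOn Q (Set.Iio n)) {v : ℕ} (h : Paired Q v (v + 1)) :
    vh - 1 ∈ ⋃₀ Q := by
  have h1 := K.one_le_vh_of_paired_succ hn hInd h
  rcases K.vh_eq_or_eq_of_paired_succ hn hInd h with rfl | rfl
  · by_contra hS
    exact hInd.not_isModuleOn_pair hn (by omega)
      (K.isModuleOn_pred_succ h1 (K.lt_of_paired' h) (.inr ⟨h, hS⟩))
  · simpa using K.mem_sUnion h

/-- If `vh = n - 1` is paired with `n - 2`, then `n - 2` is dominated by every other vertex. -/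
theorem succ_vh_mem_sUnion (K : QuasiPairing n Q vh vm vp) (hn : 3 ≤ n)
    (hInd : IndecomposableOn Q (Set.Iio n)) {v : ℕ} (h : Paired Q v (v + 1)) :
    vh + 1 ∈ ⋃₀ Q := by
  rcases K.vh_eq_or_eq_of_paired_succ hn hInd h with rfl | rfl
  · exact K.mem_sUnion h.symm
  by_contra hS
  by_cases hlt : v + 1 + 1 < n
  · exact hInd.not_isModuleOn_pair hn (by omega)
      (K.isModuleOn_pred_succ (by omega) hlt (.inl ⟨by simpa using h.symm, hS⟩))
  refine hInd.not_isModuleOn_diff_singleton hn (K.lt_of_paired h)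
    (isModuleOn_iff_paired.2 ⟨Set.sdiff_subset, fun w hw hwM => .inr fun x hx => ?_⟩)
  obtain rfl : w = v := by_contra fun hne => hwM ⟨hw, hne⟩
  rw [K.paired_iff h (by omega)]
  simp at hx
  omega

theorem transversalOf_mcOn (K : QuasiPairing n Q vh vm vp)
    (hInd : IndecomposableOn Q (Set.Iio n)) : TransversalOf (⋃₀ Q) (mcOn (Set.Iio n)) := by
  rintro C ⟨⟨hCW, hC⟩, -⟩
  by_contra hdisj
  have hCS {x y : ℕ} (hx : x ∈ C) : ¬ Paired Q x y := fun h => hdisj ⟨x, K.mem_sUnion h, hx⟩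
  rcases hC with ⟨hM, hnt⟩ | ⟨hM, hnt⟩
  · have hcl : PairClosed Q C := fun x hx y h => (hCS hx h).elim
    exact hnt (hInd _ (hcl.isModuleOn_iff.2 (isModuleOn_empty_iff.1 hM)))
  · have hcl : PairClosed Q (Set.Iio n \ C) := fun x _ y h =>
      ⟨K.lt_of_paired' h, fun hy => hCS hy h.symm⟩
    exact hnt (hInd _ (hcl.isModuleOn_iff.2 (isModuleOn_empty_iff.1 hM)))

/-- A union of blocks of `Q_part` that is a nontrivial interval of `⋃₀ Q` spans an interval of
`Iio n` that no block of `Q` crosses, hence a nontrivial module. -/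
theorem irreducibleOn_qPart (K : QuasiPairing n Q vh vm vp)
    (hInd : IndecomposableOn Q (Set.Iio n)) : IrreducibleOn (⋃₀ Q) (QPart Q vh vm vp) := by
  rintro R hR ⟨⟨hIS, hI⟩, hnt⟩
  obtain ⟨⟨x, hx, y, hy, hxy⟩, s, hsS, hsI⟩ := exists_of_not_isTrivialSubset hnt hIS
  have hSn := K.sUnion_subset_Iio
  obtain ⟨c, hc, d, hd, hcd⟩ := exists_subset_Icc (hIS.trans hSn) ⟨x, hx⟩
  have hmem {z : ℕ} (hzS : z ∈ ⋃₀ Q) (hz : z ∈ Set.Icc c d) : z ∈ ⋃₀ R := by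
    by_contra hzR
    rcases hI z ⟨hzS, hzR⟩ with h | h
    · exact (h c hc).not_ge hz.1
    · exact (h d hd).not_ge hz.2
  have hcl : PairClosed Q (Set.Icc c d) := fun z hz w hzw =>
    hcd (K.pairClosed_sUnion hR z (hmem (K.mem_sUnion hzw) hz) w hzw)
  have hIcc : Set.Icc c d ⊆ Set.Iio n := fun z hz => lt_of_le_of_lt hz.2 (hSn (hIS hd))
  exact not_isTrivialSubset_of (hcd hx) (hcd hy) hxy (hSn hsS) (fun hs => hsI (hmem hsS hs))
    (hInd _ (hcl.isModuleOn_iff.2 (isIntervalOf_Icc hIcc)))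

theorem subset_Icc_of_irreducibleOn (K : QuasiPairing n Q vh vm vp)
    (hirr : IrreducibleOn (⋃₀ Q) (QPart Q vh vm vp)) {c d : ℕ}
    (hcl : PairClosed Q (Set.Icc c d)) (hne : (⋃₀ Q ∩ Set.Icc c d).Nonempty) :
    ⋃₀ Q ⊆ Set.Icc c d := by
  have hX : PairClosed Q (⋃₀ Q ∩ Set.Icc c d) := fun x hx y h =>
    ⟨K.mem_sUnion h.symm, hcl x hx.2 y h⟩
  obtain ⟨R, hR, hRX⟩ := K.exists_sUnion_eq Set.inter_subset_left hX
  by_contra hsub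
  refine hirr R hR (hRX ▸ ⟨isIntervalOf_inter_Icc, ?_⟩)
  rintro (h | ⟨z, h⟩ | h)
  · exact hne.ne_empty h
  · obtain ⟨x, hx⟩ := hne
    obtain ⟨y, hxy⟩ := K.mem_sUnion_iff.1 hx.1
    have hy := hX x hx y hxy
    rw [h] at hx hy
    exact K.ne_of_paired hxy (hx.trans hy.symm)
  · exact hsub (h ▸ Set.inter_subset_right)

theorem eq_of_forall_paired (K : QuasiPairing n Q vh vm vp) {M : Set ℕ} {y a b : ℕ}
    (h : ∀ z ∈ M, Paired Q y z) (ha : a ∈ M) (hb : b ∈ M) (hab : a ≠ b) : M = {vm, vp} := by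
  obtain rfl := K.eq_vh_of_paired (h a ha) (h b hb) hab
  have hM : M ⊆ {vm, vp} := fun z hz => K.paired_vh_iff.1 (h z hz)
  refine hM.antisymm (Set.insert_subset_iff.2 ⟨?_, Set.singleton_subset_iff.2 ?_⟩) <;>
  · have := hM ha
    have := hM hb
    have := K.vm_lt_vp
    simp only [Set.mem_insert_iff, Set.mem_singleton_iff] at *
    rcases ‹a = vm ∨ a = vp› with rfl | rfl <;> rcases ‹b = _ ∨ b = _› with rfl | rfl <;>
      first | assumption | omega

/-- A vertex outside `[a, b]` paired with an element of the module `M` has to be paired with all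
of them, which forces `M = {vm, vp}`. -/
theorem mem_Icc_of_paired (K : QuasiPairing n Q vh vm vp) {M : Set ℕ}
    (hM : IsModuleOn Q (Set.Iio n) M) {a b : ℕ} (ha : a ∈ M) (hb : b ∈ M) (hab : a ≠ b)
    (hMab : M ⊆ Set.Icc a b) (hne : M ≠ {vm, vp}) {x y : ℕ} (hx : x ∈ M)
    (hxy : Paired Q x y) : y ∈ Set.Icc a b := by
  by_contra hy
  refine hne (K.eq_of_forall_paired (y := y) (fun z hz => ?_) ha hb hab)
  have hxab := hMab hx
  have hzab := hMab hz
  rw [Set.mem_Icc] at hy hxab hzab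
  rcases hM.paired_iff (K.lt_of_paired' hxy) fun h => hy (hMab h) with h | h
  · have := (h x hx).1 hxy.symm
    exact (h z hz).2 (by omega)
  · have := (h x hx).1 hxy.symm
    exact (h z hz).2 (by omega)

/-- A vertex strictly between `a` and `b` outside `M` is paired with `a` or `b`. -/
theorem mem_Icc_of_paired_of_ne_vh (K : QuasiPairing n Q vh vm vp) {M : Set ℕ}
    (hM : IsModuleOn Q (Set.Iio n) M) {a b : ℕ} (ha : a ∈ M) (hb : b ∈ M) (hab : a < b)
    (hMab : M ⊆ Set.Icc a b) (hne : M ≠ {vm, vp}) {x w : ℕ} (hx : x ∈ Set.Icc a b)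
    (hxvh : x ≠ vh) (hxw : Paired Q x w) : w ∈ Set.Icc a b := by
  by_cases hxM : x ∈ M
  · exact K.mem_Icc_of_paired hM ha hb hab.ne hMab hne hxM hxw
  have hxa : a < x := lt_of_le_of_ne hx.1 fun h => hxM (h ▸ ha)
  have hxb : x < b := lt_of_le_of_ne hx.2 fun h => hxM (h ▸ hb)
  rcases hM.paired_or_paired ha hb hxa hxb (hxb.trans (hM.1 hb)) hxM with h | h <;>
    rw [K.eq_of_paired hxw h hxvh] <;> simp [hab.le]

theorem eq_or_eq_of_paired_vh_of_ne (K : QuasiPairing n Q vh vm vp) {x y z : ℕ}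
    (hx : Paired Q vh x) (hy : Paired Q vh y) (hxy : x ≠ y) (hz : Paired Q vh z) :
    z = x ∨ z = y := by
  have := K.paired_vh_iff.1 hx
  have := K.paired_vh_iff.1 hy
  have := K.paired_vh_iff.1 hz
  omega

theorem ncard_setOf_paired_le_one (K : QuasiPairing n Q vh vm vp) {x : ℕ} (hx : x ≠ vh) :
    {y | Paired Q y x}.ncard ≤ 1 :=
  (Set.ncard_le_one ((Set.finite_Iio n).subset fun _ h => K.lt_of_paired h)).2
    fun _ hy _ hz => K.eq_of_paired (Paired.symm hy) (Paired.symm hz) hx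

theorem le_add_three_of_forall_paired (K : QuasiPairing n Q vh vm vp) {a b : ℕ} (ha : a ≠ vh)
    (hb : b ≠ vh) (h : ∀ w, a < w → w < b → Paired Q w a ∨ Paired Q w b) : b ≤ a + 3 := by
  have hsub : Set.Ioo a b ⊆ {w | Paired Q w a} ∪ {w | Paired Q w b} := fun w hw => h w hw.1 hw.2
  have := (Set.ncard_le_ncard hsub ((Set.finite_Iio n).subset fun w hw => by
    rcases hw with hw | hw <;> exact K.lt_of_paired hw)).trans (Set.ncard_union_le _ _)
  have := K.ncard_setOf_paired_le_one ha
  have := K.ncard_setOf_paired_le_one hb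
  have : (Set.Ioo a b).ncard = b - a - 1 := by simp
  omega

end QuasiPairing

/-- Conditions (C1)–(C4), with (C1) replaced by its consequences `zero_mem`, `last_mem`,
`inter_Icc_nonempty` and `subset_Icc` (see `QuasiPairing.conditions`). -/
structure Conditions (n : ℕ) (Q : Set (Set ℕ)) (vh vm vp : ℕ) : Prop
    extends QuasiPairing n Q vh vm vp where
  zero_mem : 0 ∈ ⋃₀ Q
  last_mem : n - 1 ∈ ⋃₀ Q
  inter_Icc_nonempty {c d : ℕ} : c < d → d < n → (⋃₀ Q ∩ Set.Icc c d).Nonempty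
  subset_Icc {c d : ℕ} : PairClosed Q (Set.Icc c d) → (⋃₀ Q ∩ Set.Icc c d).Nonempty →
    ⋃₀ Q ⊆ Set.Icc c d
  vm_add_two_le_vp : vm + 2 ≤ vp
  vh_eq_or_eq_of_paired_add_two {v : ℕ} : Paired Q v (v + 2) → Paired Q (v + 1) (v + 3) →
    vh = v ∨ vh = v + 3
  of_paired_succ {v : ℕ} : Paired Q v (v + 1) →
    (vh = v ∨ vh = v + 1) ∧ 1 ≤ vh ∧ vh - 1 ∈ ⋃₀ Q ∧ vh + 1 ∈ ⋃₀ Q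

namespace QuasiPairing

variable {n : ℕ} {Q : Set (Set ℕ)} {vh vm vp : ℕ}

theorem conditions (K : QuasiPairing n Q vh vm vp) (hn : 3 ≤ n)
    (htr : TransversalOf (⋃₀ Q) (mcOn (Set.Iio n)))
    (hirr : IrreducibleOn (⋃₀ Q) (QPart Q vh vm vp)) (h₂ : vm + 2 ≤ vp)
    (h₃ : ∀ v < n, Paired Q v (v + 2) → Paired Q (v + 1) (v + 3) → vh = v ∨ vh = v + 3)
    (h₄ : ∀ v < n, Paired Q v (v + 1) →
      (vh = v ∨ vh = v + 1) ∧ 1 ≤ vh ∧ vh - 1 ∈ ⋃₀ Q ∧ vh + 1 ∈ ⋃₀ Q) :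
    Conditions n Q vh vm vp where
  toQuasiPairing := K
  zero_mem := by simpa using htr _ (singleton_zero_mem_mcOn hn)
  last_mem := by simpa using htr _ (singleton_last_mem_mcOn hn)
  inter_Icc_nonempty := htr.inter_Icc_nonempty hn
  subset_Icc := K.subset_Icc_of_irreducibleOn hirr
  vm_add_two_le_vp := h₂
  vh_eq_or_eq_of_paired_add_two h h' := h₃ _ (K.lt_of_paired h) h h'
  of_paired_succ h := h₄ _ (K.lt_of_paired h) h

end QuasiPairing

namespace Conditions

variable {n : ℕ} {Q : Set (Set ℕ)} {vh vm vp : ℕ} {M : Set ℕ} {a b : ℕ}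

theorem not_paired_succ_of_paired (K : Conditions n Q vh vm vp) {w x : ℕ} (h : Paired Q w x) :
    ¬ Paired Q w (x + 1) := fun h' => by
  obtain rfl := K.eq_vh_of_paired h h' (by omega)
  have := K.paired_vh_iff.1 h
  have := K.paired_vh_iff.1 h'
  have := K.vm_add_two_le_vp
  omega

/-- By (C2), `vm + 1` lies strictly between `vm` and `vp`; outside the module, it would be paired
with exactly one of them, hence be `vh`, which is paired with both. -/
theorem not_isModuleOn_vm_vp (K : Conditions n Q vh vm vp) :
    ¬ IsModuleOn Q (Set.Iio n) {vm, vp} := fun hM => by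
  have := K.vm_add_two_le_vp
  have := K.lt_of_paired' K.paired_vp
  have h := (isModuleOn_pair_iff.1 hM).2.2 (vm + 1) (by simp; omega) (by omega) (by omega)
  rw [K.paired_vm_iff, K.paired_vp_iff] at h
  omega

theorem mem_Icc_of_paired_of_isModuleOn_pair (K : Conditions n Q vh vm vp) (hab : a < b)
    (hM : IsModuleOn Q (Set.Iio n) {a, b}) (hne : ({a, b} : Set ℕ) ≠ {vm, vp}) {x y : ℕ}
    (hx : x = a ∨ x = b) (hxy : Paired Q x y) : y ∈ Set.Icc a b :=
  K.mem_Icc_of_paired hM (by simp) (by simp) hab.ne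
    (by simp [Set.insert_subset_iff]; omega) hne (by simpa using hx) hxy

theorem paired_or_paired_of_isModuleOn_pair (hM : IsModuleOn Q (Set.Iio n) {a, b}) {w : ℕ}
    (haw : a < w) (hwb : w < b) : Paired Q w a ∨ Paired Q w b :=
  hM.paired_or_paired (by simp) (by simp) haw hwb
    (Set.mem_Iio.2 (hwb.trans (hM.1 (by simp : b ∈ ({a, b} : Set ℕ)))))
    (by simp; omega)

/-- If `vh = a`, the vertex `vm + 1` must be paired with `b`, and then `a + 1` can only be paired
with `a`. -/
theorem paired_succ_of_isModuleOn_pair (K : Conditions n Q vh vm vp) (hab : a < b)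
    (hM : IsModuleOn Q (Set.Iio n) {a, b}) (hne : ({a, b} : Set ℕ) ≠ {vm, vp}) (hvh : vh = a) :
    Paired Q a (a + 1) := by
  subst hvh
  have hvm := K.mem_Icc_of_paired_of_isModuleOn_pair hab hM hne (.inl rfl) K.paired_vm
  have hvp := K.mem_Icc_of_paired_of_isModuleOn_pair hab hM hne (.inl rfl) K.paired_vp
  have := K.vh_ne_vm
  have := K.vm_add_two_le_vp
  rw [Set.mem_Icc] at hvm hvp
  have hb : Paired Q (vm + 1) b := by
    refine (paired_or_paired_of_isModuleOn_pair hM (by omega) (by omega)).resolve_left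
      fun h => ?_
    have := K.paired_vh_iff.1 h.symm
    omega
  rcases paired_or_paired_of_isModuleOn_pair hM (w := vh + 1) (by omega) (by omega) with h | h
  · exact h.symm
  · have := K.eq_of_paired h.symm hb.symm (by omega)
    omega

theorem paired_pred_of_isModuleOn_pair (K : Conditions n Q vh vm vp) (hab : a < b)
    (hM : IsModuleOn Q (Set.Iio n) {a, b}) (hne : ({a, b} : Set ℕ) ≠ {vm, vp}) (hvh : vh = b) :
    Paired Q (b - 1) b := by
  subst hvh
  have hvm := K.mem_Icc_of_paired_of_isModuleOn_pair hab hM hne (.inr rfl) K.paired_vm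
  have hvp := K.mem_Icc_of_paired_of_isModuleOn_pair hab hM hne (.inr rfl) K.paired_vp
  have := K.vh_ne_vp
  have := K.vm_add_two_le_vp
  rw [Set.mem_Icc] at hvm hvp
  have ha : Paired Q (vp - 1) a := by
    refine (paired_or_paired_of_isModuleOn_pair hM (by omega) (by omega)).resolve_right
      fun h => ?_
    have := K.paired_vh_iff.1 h.symm
    omega
  rcases paired_or_paired_of_isModuleOn_pair hM (w := vh - 1) (by omega) (by omega) with h | h
  · have := K.eq_of_paired h.symm ha.symm (by omega)
    omega
  · exact h

/-- Here `a` and `a + 2` both have to be paired with `vh = a + 1`: by (C4) they lie in `⋃₀ Q`,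
and if they were paired with each other, `a + 1` would have no admissible partner. -/
theorem not_isModuleOn_pair_add_two (K : Conditions n Q vh vm vp)
    (hM : IsModuleOn Q (Set.Iio n) {a, a + 2}) (hne : ({a, a + 2} : Set ℕ) ≠ {vm, vp})
    (hvh : vh = a + 1) : False := by
  subst hvh
  have hint := paired_or_paired_of_isModuleOn_pair hM (w := a + 1) (by omega) (by omega)
  have hpart {x y : ℕ} :=
    K.mem_Icc_of_paired_of_isModuleOn_pair (by omega) hM hne (x := x) (y := y)
  have hnot : ¬ Paired Q a (a + 2) := fun h => by
    rcases hint with h' | h'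
    · exact absurd (K.eq_of_paired h'.symm h (by omega)) (by omega)
    · exact absurd (K.eq_of_paired h'.symm h.symm (by omega)) (by omega)
  have hS : a ∈ ⋃₀ Q ∧ a + 2 ∈ ⋃₀ Q := by
    rcases hint with h | h
    · exact ⟨K.mem_sUnion h.symm, (K.of_paired_succ h.symm).2.2.2⟩
    · exact ⟨by simpa using (K.of_paired_succ h).2.2.1, K.mem_sUnion h.symm⟩
  obtain ⟨x, hx⟩ := K.mem_sUnion_iff.1 hS.1
  obtain ⟨y, hy⟩ := K.mem_sUnion_iff.1 hS.2
  have := hpart (.inl rfl) hx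
  have := hpart (.inr rfl) hy
  have := K.ne_of_paired hx
  have := K.ne_of_paired hy
  rw [Set.mem_Icc] at *
  obtain rfl : x = a + 1 := by_contra fun h => hnot (by convert hx using 1; omega)
  obtain rfl : y = a + 1 := by_contra fun h => hnot (by convert hy.symm using 1; omega)
  have := K.paired_vh_iff.1 hx.symm
  have := K.paired_vh_iff.1 hy.symm
  have := K.vm_lt_vp
  obtain ⟨rfl, rfl⟩ : vm = a ∧ vp = a + 2 := by omega
  exact hne rfl

/-- If `vh` lies strictly between `a` and `b`, then `a` and `b` have one partner each and every
vertex between them is one of these partners, which leaves only patterns excluded by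
(C3) and (C4). -/
theorem not_isModuleOn_pair_of_mem_Ioo (K : Conditions n Q vh vm vp) (hab : a < b)
    (hM : IsModuleOn Q (Set.Iio n) {a, b}) (hne : ({a, b} : Set ℕ) ≠ {vm, vp})
    (hvh : vh ∈ Set.Ioo a b) : False := by
  rw [Set.mem_Ioo] at hvh
  have hint {w : ℕ} (h₁ : a < w) (h₂ : w < b) := paired_or_paired_of_isModuleOn_pair hM h₁ h₂
  have hle := K.le_add_three_of_forall_paired (a := a) (b := b) (by omega) (by omega)
    fun w h₁ h₂ => hint h₁ h₂
  obtain rfl | rfl : b = a + 2 ∨ b = a + 3 := by omega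
  · exact K.not_isModuleOn_pair_add_two hM hne (by omega)
  rcases hint (w := a + 1) (by omega) (by omega) with h₁ | h₁ <;>
    rcases hint (w := a + 2) (by omega) (by omega) with h₂ | h₂
  · exact absurd (K.eq_of_paired h₁.symm h₂.symm (by omega)) (by omega)
  · have := (K.of_paired_succ h₁.symm).1
    have := (K.of_paired_succ h₂).1
    omega
  · have := K.vh_eq_or_eq_of_paired_add_two h₂.symm h₁
    omega
  · exact absurd (K.eq_of_paired h₁.symm h₂.symm (by omega)) (by omega)

/-- When `vh` is not strictly between `a` and `b`, the interval `[a, b]` is closed under pairing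
and so contains `⋃₀ Q`, while (C4), applied to the pair given by `paired_succ_of_isModuleOn_pair`
or `paired_pred_of_isModuleOn_pair`, puts a neighbour of `vh` outside it into `⋃₀ Q`. -/
theorem not_isModuleOn_pair (K : Conditions n Q vh vm vp) (hab : a < b)
    (hM : IsModuleOn Q (Set.Iio n) {a, b}) (hne : ({a, b} : Set ℕ) ≠ {vm, vp}) : False := by
  by_cases hvh : vh ∈ Set.Ioo a b
  · exact K.not_isModuleOn_pair_of_mem_Ioo hab hM hne hvh
  have hcl : PairClosed Q (Set.Icc a b) := fun x hx y hxy => by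
    by_cases hxvh : x = vh
    · subst hxvh
      simp only [Set.mem_Icc, Set.mem_Ioo] at hx hvh
      exact K.mem_Icc_of_paired_of_isModuleOn_pair hab hM hne (by omega) hxy
    · exact K.mem_Icc_of_paired_of_ne_vh hM (by simp) (by simp) hab
        (by simp [Set.insert_subset_iff, hab.le]) hne hx hxvh hxy
  have hS := K.subset_Icc hcl (K.inter_Icc_nonempty hab (hM.1 (by simp)))
  have hvhS := hS (K.mem_sUnion K.paired_vm)
  simp only [Set.mem_Icc, Set.mem_Ioo] at hvhS hvh
  rcases (by omega : vh = a ∨ vh = b) with h | h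
  · have h' := K.of_paired_succ (K.paired_succ_of_isModuleOn_pair hab hM hne h)
    have := hS h'.2.2.1
    rw [Set.mem_Icc] at this
    omega
  · have h' := K.of_paired_succ (v := b - 1) (by
      convert K.paired_pred_of_isModuleOn_pair hab hM hne h using 2; omega)
    have := hS h'.2.2.2
    rw [Set.mem_Icc] at this
    omega

theorem paired_iff_lt_of_forall_lt_mem (K : Conditions n Q vh vm vp) (hn : 3 ≤ n)
    (hM : IsModuleOn Q (Set.Iio n) M) (h0 : 0 ∈ M) (hl : n - 1 ∈ M) {w : ℕ} (hwn : w < n)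
    (hw : w ∉ M) (hbelow : ∀ z < w, z ∈ M) : ∀ z ∈ M, Paired Q w z ↔ w < z := by
  refine (hM.paired_iff (Set.mem_Iio.2 hwn) hw).resolve_left fun h => ?_
  have hw0 : 0 < w := Nat.pos_of_ne_zero fun h' => hw (h' ▸ h0)
  have h0w : Paired Q w 0 := (h 0 h0).2 hw0
  obtain rfl : w = 1 := by
    by_contra hw1
    exact K.not_paired_succ_of_paired h0w ((h 1 (hbelow 1 (by omega))).2 (by omega))
  obtain rfl : vh = 1 := by have := K.of_paired_succ h0w.symm; omega
  have := K.vm_add_two_le_vp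
  have hvpn := K.lt_of_paired' K.paired_vp
  by_cases hvpM : vp ∈ M
  · have := (h vp hvpM).1 K.paired_vp
    omega
  · have hvp : vp < n - 1 := lt_of_le_of_ne (by omega) fun h' => hvpM (h' ▸ hl)
    rcases hM.paired_or_paired h0 hl (by omega) hvp (Set.mem_Iio.2 hvpn) hvpM with h' | h' <;>
    · have := K.eq_of_paired h' K.paired_vp.symm (by omega)
      omega

theorem paired_iff_gt_of_forall_gt_mem (K : Conditions n Q vh vm vp) (hn : 3 ≤ n)
    (hM : IsModuleOn Q (Set.Iio n) M) (h0 : 0 ∈ M) (hl : n - 1 ∈ M) {w : ℕ} (hwn : w < n)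
    (hw : w ∉ M) (habove : ∀ z, w < z → z < n → z ∈ M) : ∀ z ∈ M, Paired Q w z ↔ z < w := by
  refine (hM.paired_iff (Set.mem_Iio.2 hwn) hw).resolve_right fun h => ?_
  have hwl : w < n - 1 := lt_of_le_of_ne (by omega) fun h' => hw (h' ▸ hl)
  have hl' : Paired Q w (n - 1) := (h (n - 1) hl).2 hwl
  obtain rfl : w = n - 2 := by
    by_contra hw2
    refine K.not_paired_succ_of_paired ((h (n - 2) (habove _ (by omega) (by omega))).2
      (by omega)) ?_
    convert hl' using 2
    omega
  have hvh := K.of_paired_succ (v := n - 2) (by convert hl' using 2; omega)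
  have := K.lt_of_mem_sUnion hvh.2.2.2
  obtain rfl : vh = n - 2 := by omega
  have := K.vm_add_two_le_vp
  have := K.lt_of_paired' K.paired_vp
  by_cases hvmM : vm ∈ M
  · have := (h vm hvmM).1 K.paired_vm
    omega
  · have hvm : 0 < vm := Nat.pos_of_ne_zero fun h' => hvmM (h' ▸ h0)
    rcases hM.paired_or_paired h0 hl hvm (by omega) (Set.mem_Iio.2 (by omega)) hvmM with
      h' | h' <;>
    · have := K.eq_of_paired h' K.paired_vm.symm (by omega)
      omega

/-- The extreme vertices `w₀ < w₁` outside `M` are paired with `n - 1` and with `0`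
respectively, so an element of `M` strictly between `0` and `n - 1` would either give a vertex
paired with two consecutive ones or make both `w₀` and `w₁` equal to `vh`. -/
theorem eq_pair_of_zero_mem_of_last_mem (K : Conditions n Q vh vm vp) (hn : 3 ≤ n)
    (hM : IsModuleOn Q (Set.Iio n) M) (h0 : 0 ∈ M) (hl : n - 1 ∈ M) {w : ℕ} (hwn : w < n)
    (hw : w ∉ M) : M = {0, n - 1} := by
  obtain ⟨w₀, hw₀, w₁, hw₁, hN⟩ :=
    exists_subset_Icc (M := Set.Iio n \ M) Set.sdiff_subset ⟨w, hwn, hw⟩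
  have hbelow (z : ℕ) (hz : z < w₀) : z ∈ M :=
    by_contra fun h => (hN ⟨(hz.trans hw₀.1 : z < n), h⟩).1.not_gt hz
  have habove (z : ℕ) (hz : w₁ < z) (hzn : z < n) : z ∈ M :=
    by_contra fun h => (hN ⟨(hzn : z < n), h⟩).2.not_gt hz
  have ht₀ := K.paired_iff_lt_of_forall_lt_mem hn hM h0 hl hw₀.1 hw₀.2 hbelow
  have ht₁ := K.paired_iff_gt_of_forall_gt_mem hn hM h0 hl hw₁.1 hw₁.2 habove
  have hpos (v : ℕ) (hv : v ∉ M) : 0 < v := Nat.pos_of_ne_zero fun h => hv (h ▸ h0)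
  have hw₀₁ : w₀ < w₁ := by
    refine lt_of_le_of_ne (hN hw₀).2 fun h => ?_
    subst h
    have := (ht₀ 0 h0).1 ((ht₁ 0 h0).2 (hpos _ hw₀.2))
    omega
  refine Set.Subset.antisymm (fun z hz => ?_) (by simp [Set.insert_subset_iff, h0, hl])
  by_contra hz'
  simp only [Set.mem_insert_iff, Set.mem_singleton_iff, not_or] at hz'
  have hzn : z < n := hM.1 hz
  have := hpos _ hw₀.2
  have hzw₀ : z ≠ w₀ := fun h => hw₀.2 (h ▸ hz)
  have hzw₁ : z ≠ w₁ := fun h => hw₁.2 (h ▸ hz)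
  rcases lt_or_gt_of_ne hzw₀ with h₀ | h₀
  · exact K.not_paired_succ_of_paired ((ht₁ 0 h0).2 (by omega))
      ((ht₁ 1 (hbelow 1 (by omega))).2 (by omega))
  rcases lt_or_gt_of_ne hzw₁ with h₁ | h₁
  · have e₀ := K.eq_vh_of_paired ((ht₀ z hz).2 h₀) ((ht₀ _ hl).2 (by omega)) hz'.2
    have e₁ := K.eq_vh_of_paired ((ht₁ z hz).2 h₁) ((ht₁ 0 h0).2 (by omega)) hz'.1
    omega
  · exact K.not_paired_succ_of_paired ((ht₀ (n - 2) (habove _ (by omega) (by omega))).2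
      (by omega)) (by convert (ht₀ _ hl).2 (by omega) using 2; omega)

/-- Case of `eq_pair_of_not_pairClosed` where `vh` dominates `M`, so that its partners are `a`
and `y`. Either `vh = a + 1`, and then `[a + 2, b]` is closed under pairing although
`a + 2 ∈ ⋃₀ Q` by (C4); or `a + 1 ∉ M` is paired with every element of `M` above it, and these
can only be `b`. -/
theorem eq_pair_of_paired_vh_left (K : Conditions n Q vh vm vp)
    (hM : IsModuleOn Q (Set.Iio n) M) (ha : a ∈ M) (hb : b ∈ M) (hab : a < b)
    (hMab : M ⊆ Set.Icc a b) (hne : M ≠ {vm, vp}) (hvhM : vh ∉ M) (hvh : vh ∈ Set.Icc a b)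
    (htype : ∀ z ∈ M, Paired Q vh z ↔ z < vh) {y : ℕ} (hy : Paired Q vh y)
    (hyI : y ∉ Set.Icc a b) : M = {a, b} := by
  have hav : a < vh := lt_of_le_of_ne hvh.1 fun h => hvhM (h ▸ ha)
  have hvb : vh < b := lt_of_le_of_ne hvh.2 fun h => hvhM (h ▸ hb)
  have hbn : b < n := hM.1 hb
  have hva : Paired Q vh a := (htype a ha).2 hav
  have hya : a ≠ y := fun h => hyI (h ▸ ⟨le_rfl, hab.le⟩)
  have hapart {z : ℕ} (h : Paired Q z a) : z = vh := K.eq_of_paired h.symm hva.symm hav.ne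
  have hvhpart {z : ℕ} (hz : z ∈ Set.Icc a b) (h : Paired Q vh z) : z = a :=
    (K.eq_or_eq_of_paired_vh_of_ne hva hy hya h).resolve_right fun h' => hyI (h' ▸ hz)
  by_cases hva1 : vh = a + 1
  · subst hva1
    have hcl : PairClosed Q (Set.Icc (a + 2) b) := fun x hx w hxw => by
      rw [Set.mem_Icc] at hx
      have hw := K.mem_Icc_of_paired_of_ne_vh hM ha hb hab hMab hne ⟨by omega, hx.2⟩ (by omega)
        hxw
      have : w ≠ a := fun h => absurd (hapart (h ▸ hxw)) (by omega)
      have : w ≠ a + 1 := fun h =>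
        absurd (hvhpart (z := x) ⟨by omega, hx.2⟩ (h ▸ hxw.symm)) (by omega)
      exact ⟨by rw [Set.mem_Icc] at hw; omega, hw.2⟩
    have := K.subset_Icc hcl ⟨a + 2, (K.of_paired_succ hva.symm).2.2.2, by simp; omega⟩
      (K.mem_sUnion hva.symm)
    simp at this
  have ha1M : a + 1 ∉ M := fun h => by
    have := hvhpart (hMab h) ((htype _ h).2 (by omega))
    omega
  rcases hM.paired_iff (Set.mem_Iio.2 (by omega)) ha1M with h | h
  · exact absurd (hapart ((h a ha).2 (by omega))) (by omega)
  refine Set.Subset.antisymm (fun z hz => ?_) (by simp [Set.insert_subset_iff, ha, hb])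
  have := hMab hz
  rw [Set.mem_Icc] at this
  rcases eq_or_ne z a with rfl | hza
  · simp
  have hz1 : a + 1 < z := lt_of_le_of_ne (by omega) fun h => ha1M (h ▸ hz)
  simp [K.eq_of_paired ((h z hz).2 hz1) ((h b hb).2 (by omega)) (by omega)]

theorem eq_pair_of_paired_vh_right (K : Conditions n Q vh vm vp)
    (hM : IsModuleOn Q (Set.Iio n) M) (ha : a ∈ M) (hb : b ∈ M) (hab : a < b)
    (hMab : M ⊆ Set.Icc a b) (hne : M ≠ {vm, vp}) (hvhM : vh ∉ M) (hvh : vh ∈ Set.Icc a b)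
    (htype : ∀ z ∈ M, Paired Q vh z ↔ vh < z) {y : ℕ} (hy : Paired Q vh y)
    (hyI : y ∉ Set.Icc a b) : M = {a, b} := by
  have hav : a < vh := lt_of_le_of_ne hvh.1 fun h => hvhM (h ▸ ha)
  have hvb : vh < b := lt_of_le_of_ne hvh.2 fun h => hvhM (h ▸ hb)
  have hvb' : Paired Q vh b := (htype b hb).2 hvb
  have hyb : b ≠ y := fun h => hyI (h ▸ ⟨hab.le, le_rfl⟩)
  have hbpart {z : ℕ} (h : Paired Q z b) : z = vh := K.eq_of_paired h.symm hvb'.symm hvb.ne'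
  have hvhpart {z : ℕ} (hz : z ∈ Set.Icc a b) (h : Paired Q vh z) : z = b :=
    (K.eq_or_eq_of_paired_vh_of_ne hvb' hy hyb h).resolve_right fun h' => hyI (h' ▸ hz)
  have hbn : b < n := hM.1 hb
  by_cases hvb1 : vh = b - 1
  · subst hvb1
    have hcl : PairClosed Q (Set.Icc a (b - 2)) := fun x hx w hxw => by
      rw [Set.mem_Icc] at hx
      have hw := K.mem_Icc_of_paired_of_ne_vh hM ha hb hab hMab hne ⟨hx.1, by omega⟩ (by omega)
        hxw
      have : w ≠ b := fun h => absurd (hbpart (h ▸ hxw)) (by omega)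
      have : w ≠ b - 1 := fun h =>
        absurd (hvhpart (z := x) ⟨hx.1, by omega⟩ (h ▸ hxw.symm)) (by omega)
      exact ⟨hw.1, by rw [Set.mem_Icc] at hw; omega⟩
    have hpair : Paired Q (b - 1) (b - 1 + 1) := by convert hvb' using 2; omega
    have := K.subset_Icc hcl
      ⟨b - 2, by simpa [show b - 1 - 1 = b - 2 by omega] using (K.of_paired_succ hpair).2.2.1,
        by simp; omega⟩ (K.mem_sUnion hvb'.symm)
    simp at this
    omega
  have hb1M : b - 1 ∉ M := fun h => by
    have := hvhpart (hMab h) ((htype _ h).2 (by omega))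
    omega
  rcases hM.paired_iff (Set.mem_Iio.2 (by omega)) hb1M with h | h
  swap
  · exact absurd (hbpart ((h b hb).2 (by omega))) (by omega)
  refine Set.Subset.antisymm (fun z hz => ?_) (by simp [Set.insert_subset_iff, ha, hb])
  have := hMab hz
  rw [Set.mem_Icc] at this
  rcases eq_or_ne z b with rfl | hzb
  · simp
  have hz1 : z < b - 1 := lt_of_le_of_ne (by omega) fun h => hb1M (h ▸ hz)
  simp [K.eq_of_paired ((h z hz).2 hz1) ((h a ha).2 (by omega)) (by omega)]

/-- If `[a, b]` is not closed under pairing, `vh` is a vertex of `[a, b]` outside `M` with a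
partner outside `[a, b]`; as it is paired with `a` or `b`, it dominates `M` or is dominated by
it. -/
theorem eq_pair_of_not_pairClosed (K : Conditions n Q vh vm vp)
    (hM : IsModuleOn Q (Set.Iio n) M) (ha : a ∈ M) (hb : b ∈ M) (hab : a < b)
    (hMab : M ⊆ Set.Icc a b) (hne : M ≠ {vm, vp}) (hcl : ¬ PairClosed Q (Set.Icc a b)) :
    M = {a, b} := by
  simp only [PairClosed, not_forall, exists_prop] at hcl
  obtain ⟨x, hx, y, hxy, hy⟩ := hcl
  obtain rfl : x = vh := by_contra fun h =>
    hy (K.mem_Icc_of_paired_of_ne_vh hM ha hb hab hMab hne hx h hxy)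
  have hxM : x ∉ M := fun h => hy (K.mem_Icc_of_paired hM ha hb hab.ne hMab hne h hxy)
  rcases hM.paired_iff (Set.mem_Iio.2 (K.lt_of_paired hxy)) hxM with h | h
  · exact K.eq_pair_of_paired_vh_left hM ha hb hab hMab hne hxM hx h hxy hy
  · exact K.eq_pair_of_paired_vh_right hM ha hb hab hMab hne hxM hx h hxy hy

/-- A nontrivial module is `{a, b}` for its least element `a` and greatest element `b`, and no
such pair is a module: if `[a, b]` is closed under pairing, it contains `⋃₀ Q`, hence `0` and
`n - 1`. -/
theorem indecomposableOn (K : Conditions n Q vh vm vp) (hn : 3 ≤ n) :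
    IndecomposableOn Q (Set.Iio n) := by
  intro M hM
  by_contra hnt
  obtain ⟨⟨x, hx, y, hy, hxy⟩, w, hw, hwM⟩ := exists_of_not_isTrivialSubset hnt hM.1
  obtain ⟨a, ha, b, hb, hMab⟩ := exists_subset_Icc hM.1 ⟨x, hx⟩
  have hab : a < b := by
    have := hMab hx
    have := hMab hy
    simp only [Set.mem_Icc] at *
    omega
  have hne : M ≠ {vm, vp} := by
    rintro rfl
    exact K.not_isModuleOn_vm_vp hM
  have hpair : M = {a, b} := by
    by_cases hcl : PairClosed Q (Set.Icc a b)
    · have hS := K.subset_Icc hcl (K.inter_Icc_nonempty hab (hM.1 hb))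
      have h0 := hS K.zero_mem
      have hl := hS K.last_mem
      have hbn : b < n := hM.1 hb
      simp only [Set.mem_Icc] at h0 hl
      obtain ⟨rfl, rfl⟩ : a = 0 ∧ b = n - 1 := by omega
      exact K.eq_pair_of_zero_mem_of_last_mem hn hM ha hb hw hwM
    · exact K.eq_pair_of_not_pairClosed hM ha hb hab hMab hne hcl
  subst hpair
  exact K.not_isModuleOn_pair hab hM hne

end Conditions

/-- Theorem 3. Let `n ≥ 5`, `V = {0, …, n−1}`, `Q` a partial
quasi-pairing of `V` with distinguished data `(vh, vm, vp)`, and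
`T := Inv(underline(n), Q)`. Then `T` is indecomposable iff:
(C1) `⋃₀ Q` is a transversal of `mc(underline(n))` and `Q` is an irreducible quasi-pairing
of `⋃₀ Q`; (C2) `v_Q^+ ≥ v_Q^- + 2`; (C3) if `{v, v+2} ∈ Q` and `{v+1, v+3} ∈ Q`, then
`v̂_Q ∈ {v, v+3}`; (C4) if `{v, v+1} ∈ Q`, then `v̂_Q ∈ {v, v+1}` and both
`v̂_Q − 1 ∈ ⋃₀ Q` and `v̂_Q + 1 ∈ ⋃₀ Q`. -/
theorem stmt_4 (n : ℕ) (hn : 5 ≤ n) (Q : Set (Set ℕ))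
    (hQ : IsPartialQuasiPairingOn (Set.Iio n) Q)
    (vh vm vp : ℕ) (hdata : QPData Q vh vm vp) :
    IndecomposableOn Q (Set.Iio n) ↔
      ((TransversalOf (⋃₀ Q) (mcOn (Set.Iio n)) ∧
          IrreducibleOn (⋃₀ Q) (QPart Q vh vm vp)) ∧
        vm + 2 ≤ vp ∧
        (∀ v < n, ({v, v + 2} : Set ℕ) ∈ Q → ({v + 1, v + 3} : Set ℕ) ∈ Q →
          (vh = v ∨ vh = v + 3)) ∧
        (∀ v < n, ({v, v + 1} : Set ℕ) ∈ Q →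
          (vh = v ∨ vh = v + 1) ∧ 1 ≤ vh ∧ vh - 1 ∈ ⋃₀ Q ∧ vh + 1 ∈ ⋃₀ Q)) := by
  have K := quasiPairing_of hQ hdata
  have hn3 : 3 ≤ n := by omega
  refine ⟨fun h => ⟨⟨K.transversalOf_mcOn h, K.irreducibleOn_qPart h⟩,
    K.vm_add_two_le_vp hn3 h, fun _ _ h₁ h₂ => K.vh_eq_or_eq_of_paired_add_two hn3 h h₁ h₂,
    fun _ _ h₁ => ⟨K.vh_eq_or_eq_of_paired_succ hn3 h h₁, K.one_le_vh_of_paired_succ hn3 h h₁,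
      K.pred_vh_mem_sUnion hn3 h h₁, K.succ_vh_mem_sUnion hn3 h h₁⟩⟩, ?_⟩
  rintro ⟨⟨htr, hirr⟩, h₂, h₃, h₄⟩
  exact (K.conditions hn3 htr hirr h₂ h₃ h₄).indecomposableOn hn3
end

section
/- Let V be a finite totally ordered set and let P be a subset of the set of 2-element subsets of V. If the tournament Inv(underline(V), P) is indecomposable, then ∪P intersects every co-module of underline(V); in particular, ∪P is a transversal of mc(underline(V)). -/
open Set

lemma invArc_of_not_mem {α : Type*} [LinearOrder α] {P : Set (Set α)} {v x : α}
    (h : ({v, x} : Set α) ∉ P) : InvArc P v x ↔ v < x := by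
  simp [InvArc, h]

lemma invArc_empty {α : Type*} [LinearOrder α] {v x : α} :
    InvArc (∅ : Set (Set α)) v x ↔ v < x := by
  simp [InvArc]

/-- Fact 1. Let `V` be a finite totally ordered set and `P` a subset of
the 2-element subsets of `V`. If `Inv(underline(V), P)` is indecomposable, then `⋃₀ P`
meets every co-module of `underline(V)`; in particular, `⋃₀ P` is a transversal of
`mc(underline(V))`. -/
theorem stmt_6 {α : Type*} [LinearOrder α] (V : Set α) (hVfin : V.Finite)
    (P : Set (Set α)) (hP : ∀ B ∈ P, B ⊆ V ∧ B.ncard = 2)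
    (hind : IndecomposableOn P V) :
    (∀ C : Set α, IsCoModuleOn (∅ : Set (Set α)) V C → ((⋃₀ P) ∩ C).Nonempty) ∧
      TransversalOf (⋃₀ P) (mcOn V) := by
  have key : ∀ C : Set α, IsCoModuleOn (∅ : Set (Set α)) V C → ((⋃₀ P) ∩ C).Nonempty := by
    intro C hC
    by_contra h
    rw [not_nonempty_iff_eq_empty] at h
    have hdisj : ∀ x ∈ C, x ∉ ⋃₀ P := by
      intro x hx hxP
      exact absurd (mem_inter hxP hx) (by simp [h])
    obtain ⟨hCV, hM | hM⟩ := hC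
    · -- C itself is a nontrivial module of underline(V)
      obtain ⟨⟨hsub, hmod⟩, hnt⟩ := hM
      apply hnt
      apply hind
      refine ⟨hsub, fun v hv hvC => ?_⟩
      have hconv : ∀ x ∈ C, ({v, x} : Set α) ∉ P ∧ ({x, v} : Set α) ∉ P := by
        intro x hx
        constructor <;> intro hp <;>
          exact hdisj x hx ⟨_, hp, by simp⟩
      rcases hmod v hv hvC with h1 | h1
      · left; intro x hx
        rw [invArc_of_not_mem (hconv x hx).1]
        exact invArc_empty.mp (h1 x hx)
      · right; intro x hx
        rw [invArc_of_not_mem (hconv x hx).2]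
        exact invArc_empty.mp (h1 x hx)
    · -- V \ C is a nontrivial module of underline(V)
      obtain ⟨⟨hsub, hmod⟩, hnt⟩ := hM
      apply hnt
      apply hind
      refine ⟨hsub, fun v hv hvM => ?_⟩
      have hvC : v ∈ C := by
        by_contra hvc
        exact hvM ⟨hv, hvc⟩
      have hconv : ∀ x : α, ({v, x} : Set α) ∉ P ∧ ({x, v} : Set α) ∉ P := by
        intro x
        constructor <;> intro hp <;>
          exact hdisj v hvC ⟨_, hp, by simp⟩
      rcases hmod v hv hvM with h1 | h1
      · left; intro x hx
        rw [invArc_of_not_mem (hconv x).1]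
        exact invArc_empty.mp (h1 x hx)
      · right; intro x hx
        rw [invArc_of_not_mem (hconv x).2]
        exact invArc_empty.mp (h1 x hx)
  exact ⟨key, fun C hC => key C hC.1⟩
end

section
/- Let V be a finite totally ordered set, let Q be a partial quasi-pairing of V, let T := Inv(underline(V), Q), and let M be a module of T with |M| ≥ 2. Writing m^- := min(M) and m^+ := max(M), every element α ∈ (V ∖ M) with m^- < α < m^+ belongs to ∪Q, and exactly one of the pairs {α, m^-}, {α, m^+} belongs to Q. -/
open Set

/-- equation (3) of the paper. Let `V` be a finite totally ordered set,
`Q` a partial quasi-pairing of `V`, `T := Inv(underline(V), Q)`, and `M` a module of `T`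
with `|M| ≥ 2`, with minimum `mlo` and maximum `mhi`. Then every `α ∈ V ∖ M` with
`mlo < α < mhi` belongs to `⋃₀ Q`, and exactly one of `{α, mlo}`, `{α, mhi}` belongs
to `Q`. -/
theorem stmt_8 {α : Type*} [LinearOrder α] (V : Set α) (hVfin : V.Finite)
    (Q : Set (Set α)) (hQ : IsPartialQuasiPairingOn V Q)
    (M : Set α) (hM : IsModuleOn Q V M) (hMcard : 2 ≤ M.ncard)
    (mlo mhi : α) (hlo : IsLeast M mlo) (hhi : IsGreatest M mhi) :
    ∀ a ∈ V \ M, mlo < a → a < mhi →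
      a ∈ ⋃₀ Q ∧ Xor' (({a, mlo} : Set α) ∈ Q) (({a, mhi} : Set α) ∈ Q) := by
  intro a ha hlt1 hlt2
  rcases ha with ⟨haV, haM⟩
  rcases hM.2 a haV haM with h | h
  · have h1 := h mlo hlo.1
    have h2 := h mhi hhi.1
    rcases h1 with ⟨hc, _⟩ | ⟨_, hmem⟩
    · exact absurd hc (not_lt.2 hlt1.le)
    rcases h2 with ⟨_, hnot⟩ | ⟨hc, _⟩
    · exact ⟨⟨_, hmem, by simp⟩, Or.inl ⟨hmem, hnot⟩⟩
    · exact absurd hc (not_lt.2 hlt2.le)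
  · have h1 := h mlo hlo.1
    have h2 := h mhi hhi.1
    simp only [InvArc] at h1 h2
    rw [Set.pair_comm mlo a] at h1
    rw [Set.pair_comm mhi a] at h2
    rcases h2 with ⟨hc, _⟩ | ⟨_, hmem⟩
    · exact absurd hc (not_lt.2 hlt2.le)
    rcases h1 with ⟨_, hnot⟩ | ⟨hc, _⟩
    · exact ⟨⟨_, hmem, by simp⟩, Or.inr ⟨hmem, hnot⟩⟩
    · exact absurd hc (not_lt.2 hlt1.le)
end
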